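/- arXiv:2512.14468 — 6 statements merged into one kernel-verified Lean document; each statement's English description precedes it below -/
import Mathlib

section
/- Fix n and assume the function Fⁿ is convex. If u^{n+1} is a global minimizer over X of gⁿ(u) := Hⁿ(u) − ⟨∇Fⁿ(uⁿ), u⟩ + (1/2)‖u − yⁿ‖²_M, then Eⁿ(uⁿ) − Eⁿ(u^{n+1}) ≥ −(βₙ²/2)·‖uⁿ − u^{n−1}‖²_M + (1/2)·‖u^{n+1} − uⁿ‖²_N, where ‖v‖²_N := (3/(2·δt))·‖v‖² + ‖v‖²_M. -/
open scoped RealInnerProductSpace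

/-- Subgradient inequality for a convex differentiable function. -/
lemma convex_inner_grad_le {X : Type*} [NormedAddCommGroup X] [InnerProductSpace ℝ X]
    [CompleteSpace X]
    {φ : X → ℝ} {G x : X} (hφ : ConvexOn ℝ Set.univ φ) (hG : HasGradientAt φ G x) (y : X) :
    ⟪G, y - x⟫ ≤ φ y - φ x := by
  set w := y - x with hw
  have hline : HasDerivAt (fun t : ℝ => x + t • w) w 0 := by
    simpa using ((hasDerivAt_id (0 : ℝ)).smul_const w).const_add x
  have hcomp : HasDerivAt (fun t : ℝ => φ (x + t • w)) ⟪G, w⟫ 0 := by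
    have hFd : HasFDerivAt φ (InnerProductSpace.toDual ℝ X G) (x + (0 : ℝ) • w) := by
      simpa using hG.hasFDerivAt
    have h := hFd.comp_hasDerivAt 0 hline
    simp only [InnerProductSpace.toDual_apply_apply] at h
    exact h
  have hfun : (fun t : ℝ => φ (x + t • w)) = φ ∘ (AffineMap.lineMap x y) := by
    funext t
    simp only [Function.comp_apply, AffineMap.lineMap_apply_module']
    rw [hw, add_comm]
  have hψ : ConvexOn ℝ Set.univ (fun t : ℝ => φ (x + t • w)) := by
    rw [hfun]
    simpa using hφ.comp_affineMap (AffineMap.lineMap x y)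
  have hslope := ConvexOn.le_slope_of_hasDerivWithinAt_Ioi hψ (Set.mem_univ (0 : ℝ))
    (Set.mem_univ (1 : ℝ)) zero_lt_one hcomp.hasDerivWithinAt
  have hxy : x + (1 : ℝ) • w = y := by rw [one_smul, hw]; abel
  have hx0 : x + (0 : ℝ) • w = x := by rw [zero_smul, add_zero]
  have h2 : slope (fun t : ℝ => φ (x + t • w)) 0 1 = φ y - φ x := by
    rw [slope_def_field]
    simp only [hxy, hx0]
    norm_num
  rw [h2] at hslope
  exact hslope

set_option maxHeartbeats 1000000 in
/-- Proposition 3.2: the one-step energy decrease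
`Eⁿ(uⁿ) − Eⁿ(u^{n+1}) ≥ −(βₙ²/2)‖uⁿ−u^{n−1}‖²_M + (1/2)‖u^{n+1}−uⁿ‖²_N`,
where `‖v‖²_N = (3/(2δt))‖v‖² + ‖v‖²_M`, provided `Fⁿ` is convex and `u^{n+1}`
is a global minimizer of `gⁿ`. -/
theorem stmt_1
    {X : Type*} [NormedAddCommGroup X] [InnerProductSpace ℝ X] [FiniteDimensional ℝ X]
    (H F : X → ℝ) (f : X → X) (L δt : ℝ) (M : X →L[ℝ] X)
    (hH : ConvexOn ℝ Set.univ H) (hHcont : Continuous H)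
    (hF : ∀ x, HasGradientAt F (f x) x)
    (hL : 0 < L) (hf : ∀ x y : X, ‖f x - f y‖ ≤ L * ‖x - y‖)
    (hδt : 0 < δt)
    (hMsa : ∀ x y : X, ⟪M x, y⟫ = ⟪x, M y⟫) (hMpsd : ∀ x : X, 0 ≤ ⟪M x, x⟫)
    (uprev ucur : X) (βn : ℝ) (hβn : βn ∈ Set.Ico (0 : ℝ) 1)
    (yn : X) (hyn : yn = ucur + βn • (ucur - uprev))
    (Hn Fn En : X → ℝ)
    (hHn : ∀ v, Hn v = H v + 3 / (4 * δt) * ‖v - ucur‖ ^ 2)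
    (hFn : ∀ v, Fn v = 1 / (4 * δt) * ‖v - uprev‖ ^ 2 - F v
      - ⟪f ucur - f uprev, v - uprev⟫)
    (hEn : ∀ v, En v = Hn v - Fn v)
    (hFnconv : ConvexOn ℝ Set.univ Fn)
    (g : X → ℝ)
    (hg : ∀ v, g v = Hn v - ⟪gradient Fn ucur, v⟫ + 1 / 2 * ⟪M (v - yn), v - yn⟫)
    (unext : X) (hmin : ∀ v, g unext ≤ g v) :
    En ucur - En unext ≥
      -(βn ^ 2 / 2) * ⟪M (ucur - uprev), ucur - uprev⟫
        + 1 / 2 * (3 / (2 * δt) * ‖unext - ucur‖ ^ 2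
          + ⟪M (unext - ucur), unext - ucur⟫) := by
  -- notation
  set G := gradient Fn ucur with hG
  set d := ucur - unext with hd
  set a := unext - yn with ha
  set c1 : ℝ := 3 / (4 * δt) with hc1
  set A : ℝ := ⟪M a, a⟫ with hA
  set B : ℝ := ⟪M a, d⟫ with hB
  set C : ℝ := ⟪M d, d⟫ with hC
  set D : ℝ := ‖d‖ ^ 2 with hD
  set Gd : ℝ := ⟪G, d⟫ with hGd
  set P : ℝ := ⟪M (ucur - uprev), ucur - uprev⟫ with hP
  have hc1pos : 0 < c1 := by rw [hc1]; positivity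
  have hC0 : 0 ≤ C := hMpsd d
  have hA0 : 0 ≤ A := hMpsd a
  have hD0 : 0 ≤ D := by rw [hD]; positivity
  have hnD : ‖unext - ucur‖ ^ 2 = D := by rw [hD, hd, norm_sub_rev]
  -- M-inner expansion
  have hMexp : ∀ p q : X, ⟪M (p + q), p + q⟫ = ⟪M p, p⟫ + 2 * ⟪M p, q⟫ + ⟪M q, q⟫ := by
    intro p q
    have h1 : ⟪M q, p⟫ = ⟪M p, q⟫ := by rw [hMsa q p, real_inner_comm]
    rw [map_add, inner_add_left, inner_add_right, inner_add_right, h1]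
    ring
  have hMsmul : ∀ (s : ℝ) (p : X), ⟪M (s • p), s • p⟫ = s ^ 2 * ⟪M p, p⟫ := by
    intro s p
    rw [map_smul, real_inner_smul_left, real_inner_smul_right]
    ring
  -- differentiability of Fn
  have hFneq : Fn = fun v => 1 / (4 * δt) * ⟪v - uprev, v - uprev⟫ - F v
      - ⟪f ucur - f uprev, v - uprev⟫ := by
    funext v
    rw [hFn v, real_inner_self_eq_norm_sq]
  have hFndiff : DifferentiableAt ℝ Fn ucur := by
    rw [hFneq]
    have h1 : DifferentiableAt ℝ (fun v : X => v - uprev) ucur :=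
      (differentiable_id.sub_const uprev).differentiableAt
    exact (((h1.inner ℝ h1).const_mul _).sub (hF ucur).differentiableAt).sub
      ((differentiableAt_const _).inner ℝ h1)
  have hGrad : HasGradientAt Fn G ucur := by
    rw [hG]
    exact hFndiff.hasGradientAt
  -- subgradient inequality
  have hsub : Fn ucur - Fn unext ≤ Gd := by
    have h := convex_inner_grad_le hFnconv hGrad unext
    have hne : unext - ucur = -d := by rw [hd]; abel
    rw [hne, inner_neg_right, ← hGd] at h
    linarith
  -- scalar values of g
  have hMcur : ⟪M (ucur - yn), ucur - yn⟫ = A + 2 * B + C := by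
    have h : ucur - yn = a + d := by rw [ha, hd]; abel
    rw [h, hMexp a d, ← hA, ← hB, ← hC]
  have hMcur' : ⟪M (ucur - yn), ucur - yn⟫ = βn ^ 2 * P := by
    have h : ucur - yn = (-βn) • (ucur - uprev) := by rw [hyn]; module
    rw [h, hMsmul, ← hP]
    ring
  have e1 : g unext = H unext + c1 * D - ⟪G, unext⟫ + 1 / 2 * A := by
    rw [hg, hHn, ← ha, ← hA, hnD]
  have e2 : g ucur = H ucur - ⟪G, unext⟫ - Gd + 1 / 2 * (A + 2 * B + C) := by
    rw [hg, hHn, hMcur]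
    have h1 : ⟪G, ucur⟫ = ⟪G, unext⟫ + Gd := by
      rw [hGd, hd, inner_sub_right]; ring
    have h0 : ‖ucur - ucur‖ ^ 2 = 0 := by simp
    rw [h0, h1]
    ring
  -- strong convexity at the minimizer: key inequality for each t
  have key : ∀ t : ℝ, 0 < t → t < 1 →
      (1 - t) * (c1 * D + 1 / 2 * C) ≤ g ucur - g unext := by
    intro t ht0 ht1
    have hz3 : (1 - t) • unext + t • ucur = unext + t • d := by rw [hd]; module
    have hgz := hmin (unext + t • d)
    have hHz : H (unext + t • d) ≤ (1 - t) * H unext + t * H ucur := by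
      have h := hH.2 (Set.mem_univ unext) (Set.mem_univ ucur)
        (by linarith : (0:ℝ) ≤ 1 - t) ht0.le (by ring)
      rwa [hz3] at h
    have hnorm : ‖unext + t • d - ucur‖ ^ 2 = (t - 1) ^ 2 * D := by
      have h1 : unext + t • d - ucur = (t - 1) • d := by rw [hd]; module
      rw [h1, norm_smul, mul_pow, hD, Real.norm_eq_abs, sq_abs]
    have hMz : ⟪M (unext + t • d - yn), unext + t • d - yn⟫ = A + 2 * t * B + t ^ 2 * C := by
      have h1 : unext + t • d - yn = a + t • d := by rw [ha]; abel
      rw [h1, hMexp a (t • d), real_inner_smul_right, hMsmul, ← hA, ← hB, ← hC]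
      ring
    have hGz : ⟪G, unext + t • d⟫ = ⟪G, unext⟫ + t * Gd := by
      rw [inner_add_right, real_inner_smul_right, hGd]
    rw [hg (unext + t • d), hHn, hnorm, hMz, hGz, e1] at hgz
    have hmul : t * ((1 - t) * (c1 * D + 1 / 2 * C)) ≤ t * (g ucur - g unext) := by
      rw [e1, e2]
      nlinarith [hgz, hHz]
    exact le_of_mul_le_mul_left hmul ht0
  -- pass to the limit t → 0
  have hQle : c1 * D + 1 / 2 * C ≤ g ucur - g unext := by
    by_contra hcon
    push_neg at hcon
    set Q : ℝ := c1 * D + 1 / 2 * C with hQ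
    set K : ℝ := g ucur - g unext with hK
    have hQ0 : 0 ≤ Q := by
      rw [hQ]
      have := mul_nonneg hc1pos.le hD0
      linarith
    have hQK : 0 < Q - K := by linarith
    set t : ℝ := min (1 / 2) ((Q - K) / (2 * (Q + 1))) with ht
    have hden : 0 < 2 * (Q + 1) := by linarith
    have ht0 : 0 < t := lt_min (by norm_num) (div_pos hQK hden)
    have ht1 : t < 1 := lt_of_le_of_lt (min_le_left _ _) (by norm_num)
    have hkey := key t ht0 ht1
    have ht2 : t * (2 * (Q + 1)) ≤ Q - K := by
      have h := min_le_right (1 / 2 : ℝ) ((Q - K) / (2 * (Q + 1)))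
      rw [← ht] at h
      exact (le_div_iff₀ hden).mp h
    nlinarith [hkey, ht0.le, ht2]
  -- assembly
  have hgdiff : g ucur - g unext = (H ucur - H unext - c1 * D) - Gd + B + 1 / 2 * C := by
    rw [e1, e2]; ring
  have hBP : A + 2 * B + C = βn ^ 2 * P := by rw [← hMcur, hMcur']
  have hEnd : En ucur - En unext
      = (H ucur - H unext - c1 * D) - (Fn ucur - Fn unext) := by
    rw [hEn, hEn, hHn, hHn]
    have h1 : ‖ucur - ucur‖ ^ 2 = 0 := by simp
    rw [h1, hnD]
    ring
  have hfin2 : ⟪M (unext - ucur), unext - ucur⟫ = C := by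
    have h1 : unext - ucur = -d := by rw [hd]; abel
    rw [h1, map_neg, inner_neg_neg, hC]
  rw [ge_iff_le, hnD, hfin2, hEnd]
  have h32 : 3 / (2 * δt) = 2 * c1 := by
    rw [hc1]
    field_simp
    ring
  rw [h32]
  linarith [hQle, hsub, hgdiff, hBP, hA0, hC0, hD0, hc1pos]
end

section
/- Assume 0 < δt ≤ 1/(2L) and that E is bounded below on X. Then the sequence (‖u^{n+1} − uⁿ‖²) generated by the BapDCA_e algorithm is summable: Σ_{n=1}^{∞} ‖u^{n+1} − uⁿ‖² < ∞. In particular ‖u^{n+1} − uⁿ‖ → 0 as n → ∞. -/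
open scoped RealInnerProductSpace
open Filter Topology Asymptotics

section Aux
variable {X : Type*} [NormedAddCommGroup X] [InnerProductSpace ℝ X] [CompleteSpace X]


lemma hga_sq (a p : X) : HasGradientAt (fun v => ‖v - a‖ ^ 2) ((2:ℝ) • (p - a)) p := by
  rw [hasGradientAt_iff_isLittleO]
  have h : (fun v : X => ‖v - a‖ ^ 2 - ‖p - a‖ ^ 2 - ⟪(2:ℝ) • (p - a), v - p⟫)
      = fun v => ‖v - p‖ ^ 2 := by
    funext v
    have h1 : v - a = (v - p) + (p - a) := by abel
    rw [h1, norm_add_sq_real, real_inner_smul_left, real_inner_comm]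
    ring
  rw [h]
  rw [isLittleO_iff]
  intro c hc
  rw [Metric.eventually_nhds_iff]
  refine ⟨c, hc, fun {v} hv => ?_⟩
  have : dist v p = ‖v - p‖ := dist_eq_norm v p
  rw [this] at hv
  have h2 : ‖‖v - p‖ ^ 2‖ = ‖v - p‖ * ‖v - p‖ := by
    rw [Real.norm_eq_abs, abs_of_nonneg (by positivity)]; ring
  rw [h2]
  exact mul_le_mul_of_nonneg_right hv.le (norm_nonneg _)

lemma hga_lin (w a p : X) : HasGradientAt (fun v => ⟪w, v - a⟫) w p := by
  rw [hasGradientAt_iff_isLittleO]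
  have h : (fun v : X => ⟪w, v - a⟫ - ⟪w, p - a⟫ - ⟪w, v - p⟫) = fun _ => (0:ℝ) := by
    funext v; rw [← inner_sub_right, ← inner_sub_right]
    have : v - a - (p - a) - (v - p) = 0 := by abel
    rw [this, inner_zero_right]
  rw [h]
  exact isLittleO_zero _ _

lemma hga_add {f g : X → ℝ} {f' g' p : X} (hf : HasGradientAt f f' p)
    (hg : HasGradientAt g g' p) : HasGradientAt (fun v => f v + g v) (f' + g') p := by
  rw [hasGradientAt_iff_hasFDerivAt, map_add]
  exact hf.hasFDerivAt.add hg.hasFDerivAt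

lemma hga_sub {f g : X → ℝ} {f' g' p : X} (hf : HasGradientAt f f' p)
    (hg : HasGradientAt g g' p) : HasGradientAt (fun v => f v - g v) (f' - g') p := by
  rw [hasGradientAt_iff_hasFDerivAt, map_sub]
  exact hf.hasFDerivAt.sub hg.hasFDerivAt

lemma hga_const_mul {f : X → ℝ} {f' p : X} (c : ℝ) (hf : HasGradientAt f f' p) :
    HasGradientAt (fun v => c * f v) (c • f') p := by
  rw [hasGradientAt_iff_hasFDerivAt, map_smul]
  exact hf.hasFDerivAt.const_mul c


lemma descent_lemma (F : X → ℝ) (f : X → X) (L : ℝ) (hL : 0 ≤ L)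
    (hF : ∀ x, HasGradientAt F (f x) x)
    (hf : ∀ x y : X, ‖f x - f y‖ ≤ L * ‖x - y‖) (x z : X) :
    F z ≤ F x + ⟪f x, z - x⟫ + L / 2 * ‖z - x‖ ^ 2 := by
  set d := z - x with hd
  set φ : ℝ → ℝ := fun t => F (x + t • d) - t * ⟪f x, d⟫ - L / 2 * t ^ 2 * ‖d‖ ^ 2 with hφ
  have hderiv : ∀ t : ℝ, HasDerivAt φ
      (⟪f (x + t • d), d⟫ - ⟪f x, d⟫ - L * t * ‖d‖ ^ 2) t := by
    intro t
    have h1 : HasDerivAt (fun t : ℝ => x + t • d) d t := by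
      simpa using (HasDerivAt.const_add x ((hasDerivAt_id t).smul_const d))
    have h2 : HasDerivAt (fun t : ℝ => F (x + t • d)) ⟪f (x + t • d), d⟫ t := by
      have := (hF (x + t • d)).hasFDerivAt.comp_hasDerivAt t h1
      simp [InnerProductSpace.toDual_apply_apply] at this
      exact this
    have h3 : HasDerivAt (fun t : ℝ => t * ⟪f x, d⟫) ⟪f x, d⟫ t := by
      simpa using (hasDerivAt_id t).mul_const (⟪f x, d⟫)
    have h4 : HasDerivAt (fun t : ℝ => L / 2 * t ^ 2 * ‖d‖ ^ 2) (L * t * ‖d‖ ^ 2) t := by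
      have : HasDerivAt (fun t : ℝ => t ^ 2) (2 * t) t := by
        simpa using hasDerivAt_pow 2 t
      have := (this.const_mul (L / 2)).mul_const (‖d‖ ^ 2)
      exact this.congr_deriv (by ring)
    exact (h2.sub h3).sub h4
  have hmono : φ 1 ≤ φ 0 := by
    have hcont : ContinuousOn φ (Set.Icc 0 1) := by
      intro t _; exact ((hderiv t).continuousAt).continuousWithinAt
    have hanti : AntitoneOn φ (Set.Icc (0:ℝ) 1) := by
      apply antitoneOn_of_deriv_nonpos (convex_Icc 0 1) hcont
      · intro t ht
        rw [interior_Icc] at ht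
        exact ((hderiv t).differentiableAt).differentiableWithinAt
      · intro t ht
        rw [interior_Icc] at ht
        rw [(hderiv t).deriv]
        have hb : ⟪f (x + t • d) - f x, d⟫ ≤ L * t * ‖d‖ ^ 2 := by
          calc ⟪f (x + t • d) - f x, d⟫ ≤ ‖f (x + t • d) - f x‖ * ‖d‖ :=
                real_inner_le_norm _ _
            _ ≤ (L * ‖(x + t • d) - x‖) * ‖d‖ :=
                mul_le_mul_of_nonneg_right (hf _ _) (norm_nonneg _)
            _ = L * t * ‖d‖ ^ 2 := by
                rw [add_sub_cancel_left, norm_smul, Real.norm_eq_abs,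
                  abs_of_nonneg ht.1.le]; ring
        have : ⟪f (x + t • d), d⟫ - ⟪f x, d⟫ = ⟪f (x + t • d) - f x, d⟫ := by
          rw [inner_sub_left]
        linarith
    exact hanti (by norm_num) (by norm_num) (by norm_num)
  have h0 : φ 0 = F x := by simp [hφ]
  have h1 : φ 1 = F z - ⟪f x, d⟫ - L / 2 * ‖d‖ ^ 2 := by
    have hx : x + (1:ℝ) • d = z := by rw [hd]; simp
    simp only [hφ, hx]; ring
  rw [h0, h1] at hmono
  linarith


lemma quad_expand (x e : X) (t : ℝ) :
    ‖x + t • e‖ ^ 2 = ‖x‖ ^ 2 + 2 * t * ⟪x, e⟫ + t ^ 2 * ‖e‖ ^ 2 := by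
  rw [norm_add_sq_real, real_inner_smul_right, norm_smul, Real.norm_eq_abs,
    mul_pow, sq_abs]
  ring

lemma Mquad_expand (M : X →L[ℝ] X) (hMsa : ∀ x y : X, ⟪M x, y⟫ = ⟪x, M y⟫)
    (x e : X) (t : ℝ) :
    ⟪M (x + t • e), x + t • e⟫
      = ⟪M x, x⟫ + 2 * t * ⟪M x, e⟫ + t ^ 2 * ⟪M e, e⟫ := by
  have hcross : ⟪M e, x⟫ = ⟪M x, e⟫ := by
    rw [hMsa e x, real_inner_comm]
  rw [map_add, map_smul, inner_add_left, inner_add_right, inner_add_right,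
    inner_smul_left, inner_smul_right, inner_smul_left, inner_smul_right, hcross]
  simp only [RCLike.star_def, starRingEnd_apply, star_trivial]
  ring

lemma strong_min (φ : X → ℝ) (hφ : ConvexOn ℝ Set.univ φ) (c₁ : ℝ) (hc₁ : 0 ≤ c₁)
    (M : X →L[ℝ] X) (hMsa : ∀ x y : X, ⟪M x, y⟫ = ⟪x, M y⟫)
    (a b w v : X) (G : X → ℝ)
    (hG : ∀ z, G z = φ z + c₁ * ‖z - a‖ ^ 2 + 1 / 2 * ⟪M (z - b), z - b⟫)
    (hmin : ∀ z, G w ≤ G z) :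
    G w + c₁ * ‖v - w‖ ^ 2 + 1 / 2 * ⟪M (v - w), v - w⟫ ≤ G v := by
  set e := v - w with he
  set K := c₁ * ‖e‖ ^ 2 + 1 / 2 * ⟪M e, e⟫ with hK
  have hstep : ∀ t : ℝ, t ∈ Set.Ioo (0:ℝ) 1 → (1 - t) * K ≤ G v - G w := by
    intro t ht
    set p := w + t • e with hp
    have hφc : φ p ≤ (1 - t) * φ w + t * φ v := by
      have := hφ.2 (Set.mem_univ w) (Set.mem_univ v)
        (by linarith [ht.2] : (0:ℝ) ≤ 1 - t) ht.1.le (by ring)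
      have hpt : (1 - t) • w + t • v = p := by
        rw [hp, he]; module
      rwa [hpt] at this
    have hq1 : ‖p - a‖ ^ 2 = ‖w - a‖ ^ 2 + 2 * t * ⟪w - a, e⟫ + t ^ 2 * ‖e‖ ^ 2 := by
      rw [show p - a = (w - a) + t • e by rw [hp]; abel, quad_expand]
    have hq1' : ‖v - a‖ ^ 2 = ‖w - a‖ ^ 2 + 2 * ⟪w - a, e⟫ + ‖e‖ ^ 2 := by
      rw [show v - a = (w - a) + (1:ℝ) • e by rw [he]; module, quad_expand]
      ring
    have hq2 : ⟪M (p - b), p - b⟫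
        = ⟪M (w - b), w - b⟫ + 2 * t * ⟪M (w - b), e⟫ + t ^ 2 * ⟪M e, e⟫ := by
      rw [show p - b = (w - b) + t • e by rw [hp]; abel, Mquad_expand M hMsa]
    have hq2' : ⟪M (v - b), v - b⟫
        = ⟪M (w - b), w - b⟫ + 2 * ⟪M (w - b), e⟫ + ⟪M e, e⟫ := by
      rw [show v - b = (w - b) + (1:ℝ) • e by rw [he]; module, Mquad_expand M hMsa]
      ring
    have hGp : G p ≤ (1 - t) * G w + t * G v - t * (1 - t) * K := by
      rw [hG p, hG w, hG v, hq1, hq1', hq2, hq2', hK]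
      nlinarith [hφc]
    have hmw := hmin p
    have htpos := ht.1
    nlinarith [hmw, hGp]
  have hlim : Tendsto (fun t : ℝ => (1 - t) * K) (𝓝[>] (0:ℝ)) (𝓝 K) := by
    have : Tendsto (fun t : ℝ => (1 - t) * K) (𝓝 (0:ℝ)) (𝓝 ((1 - 0) * K)) :=
      (Continuous.tendsto (by continuity) 0)
    simpa using this.mono_left nhdsWithin_le_nhds
  have hev : ∀ᶠ t in 𝓝[>] (0:ℝ), (1 - t) * K ≤ G v - G w := by
    filter_upwards [Ioo_mem_nhdsGT_of_mem (Set.mem_Ico.2 ⟨le_refl 0, zero_lt_one⟩)]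
      with t ht using hstep t ht
  have : K ≤ G v - G w := le_of_tendsto hlim hev
  rw [hK, he] at this
  linarith

end Aux

set_option maxHeartbeats 2000000 in
/-- Lemma 3.3: square summability of the successive differences of the BapDCA_e iterates. -/
theorem stmt_3
    {X : Type*} [NormedAddCommGroup X] [InnerProductSpace ℝ X] [FiniteDimensional ℝ X]
    (H F : X → ℝ) (f : X → X) (L δt : ℝ) (M : X →L[ℝ] X)
    (hH : ConvexOn ℝ Set.univ H) (hHcont : Continuous H)
    (hF : ∀ x, HasGradientAt F (f x) x)
    (hL : 0 < L) (hf : ∀ x y : X, ‖f x - f y‖ ≤ L * ‖x - y‖)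
    (hδt : 0 < δt)
    (hMsa : ∀ x y : X, ⟪M x, y⟫ = ⟪x, M y⟫) (hMpsd : ∀ x : X, 0 ≤ ⟪M x, x⟫)
    (u : ℕ → X) (β : ℕ → ℝ) (hβ : ∀ n, β n ∈ Set.Ico (0 : ℝ) 1)
    (y : ℕ → X) (hy : ∀ n, y n = u n + β n • (u n - u (n - 1)))
    (Fn : ℕ → X → ℝ)
    (hFn : ∀ n v, Fn n v = 1 / (4 * δt) * ‖v - u (n - 1)‖ ^ 2 - F v
      - ⟪f (u n) - f (u (n - 1)), v - u (n - 1)⟫)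
    (g : ℕ → X → ℝ)
    (hg : ∀ n v, g n v = H v + 3 / (4 * δt) * ‖v - u n‖ ^ 2
      - ⟪gradient (Fn n) (u n), v⟫ + 1 / 2 * ⟪M (v - y n), v - y n⟫)
    (hmin : ∀ n v, g n (u (n + 1)) ≤ g n v)
    (hδtL : δt ≤ 1 / (2 * L))
    (hEbdd : ∃ B : ℝ, ∀ x : X, B ≤ H x + F x)
    :
    Summable (fun n : ℕ => ‖u (n + 1) - u n‖ ^ 2)
      ∧ Filter.Tendsto (fun n : ℕ => ‖u (n + 1) - u n‖) Filter.atTop (nhds 0) := by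
  obtain ⟨B, hB⟩ := hEbdd
  have hL2c : L ≤ 2 * (1 / (4 * δt)) := by
    rw [le_div_iff₀ (by positivity : (0:ℝ) < 2 * L)] at hδtL
    rw [show 2 * (1 / (4 * δt)) = 1 / (2 * δt) by ring,
      le_div_iff₀ (by positivity : (0:ℝ) < 2 * δt)]
    nlinarith
  set c : ℝ := 1 / (4 * δt) with hcdef
  have hc : 0 < c := by rw [hcdef]; positivity
  have h34 : 3 / (4 * δt) = 3 * c := by rw [hcdef]; ring
  set Φ : ℕ → ℝ := fun k => H (u k) + F (u k)
      + 1 / 2 * ⟪M (u k - u (k - 1)), u k - u (k - 1)⟫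
      + (c + L / 2) * ‖u k - u (k - 1)‖ ^ 2 with hΦ
  -- the key one-step inequality
  have key : ∀ n : ℕ, Φ (n + 1) + c * ‖u (n + 1) - u n‖ ^ 2 ≤ Φ n := by
    intro n
    -- gradient of Fn n at u n
    have hFneq : Fn n = fun v => c * ‖v - u (n - 1)‖ ^ 2 - F v
        - ⟪f (u n) - f (u (n - 1)), v - u (n - 1)⟫ := funext (hFn n)
    have hgrad : HasGradientAt (Fn n)
        (c • ((2:ℝ) • (u n - u (n - 1))) - f (u n)
          - (f (u n) - f (u (n - 1)))) (u n) := by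
      rw [hFneq]
      exact hga_sub (hga_sub (hga_const_mul c (hga_sq (u (n - 1)) (u n)))
        (hF (u n))) (hga_lin (f (u n) - f (u (n - 1))) (u (n - 1)) (u n))
    have hGn : gradient (Fn n) (u n)
        = c • ((2:ℝ) • (u n - u (n - 1))) - f (u n)
          - (f (u n) - f (u (n - 1))) := hgrad.gradient
    -- strong convexity at the minimizer
    have hφconv : ConvexOn ℝ Set.univ (fun v : X => H v - ⟪gradient (Fn n) (u n), v⟫) := by
      apply hH.sub
      refine ⟨convex_univ, fun x _ z _ p q hp hq hpq => ?_⟩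
      rw [inner_add_right, real_inner_smul_right, real_inner_smul_right]
      simp [smul_eq_mul]
    have F1 := strong_min (fun v : X => H v - ⟪gradient (Fn n) (u n), v⟫) hφconv
      (3 * c) (by linarith) M hMsa (u n) (y n) (u (n + 1)) (u n) (g n)
      (fun z => by rw [hg n z, h34]; ring) (hmin n)
    rw [hg n (u (n + 1)), hg n (u n), h34] at F1
    have hnn : ‖u n - u n‖ ^ 2 = (0:ℝ) := by simp
    have hrev : ‖u n - u (n + 1)‖ ^ 2 = ‖u (n + 1) - u n‖ ^ 2 := by rw [norm_sub_rev]
    have hMrev : ⟪M (u n - u (n + 1)), u n - u (n + 1)⟫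
        = ⟪M (u (n + 1) - u n), u (n + 1) - u n⟫ := by
      rw [show u n - u (n + 1) = -(u (n + 1) - u n) by abel, map_neg, inner_neg_neg]
    rw [hnn, hrev, hMrev] at F1
    -- descent lemma for F
    have F2 := descent_lemma F f L hL.le hF hf (u n) (u (n + 1))
    -- gradient inner product identity
    have F3 : ⟪gradient (Fn n) (u n), u (n + 1)⟫ - ⟪gradient (Fn n) (u n), u n⟫
        = 2 * c * ⟪u n - u (n - 1), u (n + 1) - u n⟫
          - ⟪f (u n), u (n + 1) - u n⟫
          - ⟪f (u n) - f (u (n - 1)), u (n + 1) - u n⟫ := by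
      rw [← inner_sub_right, hGn, inner_sub_left, inner_sub_left,
        real_inner_smul_left, real_inner_smul_left]
      ring
    -- Cauchy–Schwarz / Young estimates
    have F4s : 2 * c * ⟪u n - u (n - 1), u (n + 1) - u n⟫
        ≤ c * ‖u n - u (n - 1)‖ ^ 2 + c * ‖u (n + 1) - u n‖ ^ 2 := by
      have h4 : ⟪u n - u (n - 1), u (n + 1) - u n⟫
          ≤ 1 / 2 * ‖u n - u (n - 1)‖ ^ 2 + 1 / 2 * ‖u (n + 1) - u n‖ ^ 2 := by
        have h := real_inner_le_norm (u n - u (n - 1)) (u (n + 1) - u n)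
        nlinarith [sq_nonneg (‖u n - u (n - 1)‖ - ‖u (n + 1) - u n‖)]
      have := mul_le_mul_of_nonneg_left h4 (by linarith : (0:ℝ) ≤ 2 * c)
      linarith
    have F5 : -⟪f (u n) - f (u (n - 1)), u (n + 1) - u n⟫
        ≤ L / 2 * ‖u n - u (n - 1)‖ ^ 2 + L / 2 * ‖u (n + 1) - u n‖ ^ 2 := by
      have habs := abs_real_inner_le_norm (f (u n) - f (u (n - 1))) (u (n + 1) - u n)
      have hlip := mul_le_mul_of_nonneg_right (hf (u n) (u (n - 1)))
        (norm_nonneg (u (n + 1) - u n))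
      have h1 := neg_abs_le (⟪f (u n) - f (u (n - 1)), u (n + 1) - u n⟫)
      nlinarith [mul_nonneg hL.le (sq_nonneg (‖u n - u (n - 1)‖ - ‖u (n + 1) - u n‖))]
    -- extrapolation term estimates
    have F6 : 1 / 2 * ⟪M (u n - y n), u n - y n⟫
        ≤ 1 / 2 * ⟪M (u n - u (n - 1)), u n - u (n - 1)⟫ := by
      have hyn : u n - y n = -(β n • (u n - u (n - 1))) := by rw [hy n]; abel
      rw [hyn, map_neg, inner_neg_neg, map_smul, real_inner_smul_left,
        real_inner_smul_right]
      have hb2 : β n * β n ≤ 1 := by nlinarith [(hβ n).1, (hβ n).2]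
      have := mul_le_mul_of_nonneg_right hb2 (hMpsd (u n - u (n - 1)))
      nlinarith [this]
    have F7 : (0:ℝ) ≤ ⟪M (u (n + 1) - y n), u (n + 1) - y n⟫ := hMpsd _
    have hprod : L * ‖u (n + 1) - u n‖ ^ 2
        ≤ 2 * c * ‖u (n + 1) - u n‖ ^ 2 := by
      have := mul_le_mul_of_nonneg_right hL2c (sq_nonneg ‖u (n + 1) - u n‖)
      rw [hcdef]; rw [hcdef] at this; linarith
    -- assemble
    simp only [hΦ, Nat.add_sub_cancel]
    linarith [F1, F2, F3, F4s, F5, F6, F7, hprod]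
  -- lower bound for Φ
  have hlow : ∀ n, B ≤ Φ n := by
    intro n
    have h1 := hB (u n)
    have h2 : (0:ℝ) ≤ 1 / 2 * ⟪M (u n - u (n - 1)), u n - u (n - 1)⟫ := by
      have := hMpsd (u n - u (n - 1)); linarith
    have h3 : (0:ℝ) ≤ (c + L / 2) * ‖u n - u (n - 1)‖ ^ 2 := by
      apply mul_nonneg (by linarith) (sq_nonneg _)
    simp only [hΦ]; linarith
  -- partial sums bounded
  have htel : ∀ N : ℕ, Φ N + ∑ k ∈ Finset.range N, c * ‖u (k + 1) - u k‖ ^ 2 ≤ Φ 0 := by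
    intro N
    induction N with
    | zero => simp
    | succ N ih =>
      rw [Finset.sum_range_succ]
      have := key N
      linarith
  have hsummable' : Summable (fun n : ℕ => c * ‖u (n + 1) - u n‖ ^ 2) := by
    apply summable_of_sum_range_le (c := Φ 0 - B)
    · intro n
      exact mul_nonneg hc.le (sq_nonneg _)
    · intro N
      linarith [htel N, hlow N]
  have hsummable : Summable (fun n : ℕ => ‖u (n + 1) - u n‖ ^ 2) := by
    refine (hsummable'.mul_left c⁻¹).congr fun n => ?_
    field_simp
  refine ⟨hsummable, ?_⟩
  have h0 : Tendsto (fun n : ℕ => ‖u (n + 1) - u n‖ ^ 2) atTop (𝓝 0) :=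
    hsummable.tendsto_atTop_zero
  have h1 : Tendsto (fun n : ℕ => Real.sqrt (‖u (n + 1) - u n‖ ^ 2)) atTop (𝓝 (Real.sqrt 0)) :=
    (Real.continuous_sqrt.tendsto 0).comp h0
  simpa [Real.sqrt_sq (norm_nonneg _)] using h1
end

section
/- Assume 0 < δt ≤ 1/(2L) and that E is bounded below on X. Then the limit ζ := lim_{n→∞} E(uⁿ) exists for the sequence (uⁿ) generated by the BapDCA_e algorithm. -/
open scoped RealInnerProductSpace
open Filter Topology
section Aux

variable {X : Type*} [NormedAddCommGroup X] [InnerProductSpace ℝ X] [CompleteSpace X]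

/-- Descent lemma: quadratic upper bound from Lipschitz gradient. -/
lemma my_descent (F : X → ℝ) (f : X → X) (L : ℝ)
    (hF : ∀ x, HasGradientAt F (f x) x)
    (hf : ∀ x y : X, ‖f x - f y‖ ≤ L * ‖x - y‖) (a b : X) :
    F b ≤ F a + ⟪f a, b - a⟫ + L / 2 * ‖b - a‖ ^ 2 := by
  set φ : ℝ → ℝ := fun t => F (a + t • (b - a)) - t * ⟪f a, b - a⟫ - L / 2 * t ^ 2 * ‖b - a‖ ^ 2 with hφ
  have hline : ∀ t : ℝ, HasDerivAt (fun t : ℝ => a + t • (b - a)) (b - a) t := by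
    intro t
    simpa using ((hasDerivAt_id t).smul_const (b - a)).const_add a
  have hφd : ∀ t : ℝ, HasDerivAt φ
      (⟪f (a + t • (b - a)), b - a⟫ - ⟪f a, b - a⟫ - L * t * ‖b - a‖ ^ 2) t := by
    intro t
    have h1 : HasDerivAt (fun t : ℝ => F (a + t • (b - a)))
        (⟪f (a + t • (b - a)), b - a⟫) t := by
      have := ((hF (a + t • (b - a))).hasFDerivAt).comp_hasDerivAt t (hline t)
      simpa [InnerProductSpace.toDual_apply_apply, Function.comp_def] using this
    have h2 : HasDerivAt (fun t : ℝ => t * ⟪f a, b - a⟫) (⟪f a, b - a⟫) t := by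
      simpa using (hasDerivAt_id t).mul_const (⟪f a, b - a⟫ : ℝ)
    have h3 : HasDerivAt (fun t : ℝ => L / 2 * t ^ 2 * ‖b - a‖ ^ 2)
        (L * t * ‖b - a‖ ^ 2) t := by
      have := ((hasDerivAt_pow 2 t).const_mul (L / 2)).mul_const (‖b - a‖ ^ 2)
      exact this.congr_deriv (by rw [show (2:ℕ) - 1 = 1 from rfl]; push_cast; ring)
    exact (h1.sub h2).sub h3
  have hdiffφ : Differentiable ℝ φ := fun t => (hφd t).differentiableAt
  have hmono : AntitoneOn φ (Set.Icc (0:ℝ) 1) := by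
    apply antitoneOn_of_deriv_nonpos (convex_Icc 0 1) hdiffφ.continuous.continuousOn
      (hdiffφ.differentiableOn)
    intro t ht
    rw [interior_Icc] at ht
    rw [(hφd t).deriv]
    have h1 : ⟪f (a + t • (b - a)), b - a⟫ - ⟪f a, b - a⟫
        = ⟪f (a + t • (b - a)) - f a, b - a⟫ := by rw [inner_sub_left]
    have h2 : ⟪f (a + t • (b - a)) - f a, b - a⟫ ≤ ‖f (a + t • (b - a)) - f a‖ * ‖b - a‖ :=
      real_inner_le_norm _ _
    have h3 : ‖f (a + t • (b - a)) - f a‖ ≤ L * (t * ‖b - a‖) := by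
      have := hf (a + t • (b - a)) a
      simpa [norm_smul, abs_of_nonneg ht.1.le] using this
    nlinarith [norm_nonneg (b - a), mul_le_mul_of_nonneg_right h3 (norm_nonneg (b - a))]
  have := hmono (Set.mem_Icc.2 ⟨le_refl 0, zero_le_one⟩) (Set.mem_Icc.2 ⟨zero_le_one, le_refl 1⟩)
    zero_le_one
  simp only [hφ] at this
  simp at this
  linarith [this]


variable {X : Type*} [NormedAddCommGroup X] [InnerProductSpace ℝ X] [CompleteSpace X]

lemma my_fn_gradient (F : X → ℝ) (f : X → X) (s : ℝ) (hs : s ≠ 0) (q c p : X)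
    (hFp : HasGradientAt F (f p) p) :
    HasGradientAt (fun v => 1 / (4 * s) * ‖v - q‖ ^ 2 - F v - ⟪c, v - q⟫)
      ((1 / (2 * s)) • (p - q) - f p - c) p := by
  rw [hasGradientAt_iff_hasFDerivAt]
  have h1 : HasFDerivAt (fun v : X => ‖v - q‖ ^ 2) (2 • (innerSL ℝ (p - q))) p := by
    simpa using ((hasFDerivAt_id p).sub_const q).norm_sq
  have h2 := hFp.hasFDerivAt
  have h3 : HasFDerivAt (fun v : X => (⟪c, v - q⟫ : ℝ)) (innerSL ℝ c) p := by
    have h := ((innerSL ℝ c).hasFDerivAt (x := p)).sub_const (⟪c, q⟫ : ℝ)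
    have : (fun v : X => (innerSL ℝ c) v - ⟪c, q⟫) = fun v : X => (⟪c, v - q⟫ : ℝ) := by
      funext v; simp [inner_sub_right]
    rwa [this] at h
  have h := ((h1.const_mul (1 / (4 * s))).sub h2).sub h3
  refine h.congr_fderiv ?_
  ext v
  simp [InnerProductSpace.toDual_apply_apply, inner_sub_left, real_inner_smul_left]
  ring




lemma my_strong_min (H : X → ℝ) (hH : ConvexOn ℝ Set.univ H) (M : X →L[ℝ] X)
    (hMsa : ∀ x y : X, ⟪M x, y⟫ = ⟪x, M y⟫)
    (κ : ℝ) (G w p d : X)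
    (hmin : ∀ v : X, H d + κ * ‖d - p‖ ^ 2 - ⟪G, d⟫ + 1 / 2 * ⟪M (d - w), d - w⟫
      ≤ H v + κ * ‖v - p‖ ^ 2 - ⟪G, v⟫ + 1 / 2 * ⟪M (v - w), v - w⟫) :
    H d + κ * ‖d - p‖ ^ 2 - ⟪G, d⟫ + 1 / 2 * ⟪M (d - w), d - w⟫
      + κ * ‖d - p‖ ^ 2 + 1 / 2 * ⟪M (d - p), d - p⟫
      ≤ H p - ⟪G, p⟫ + 1 / 2 * ⟪M (p - w), p - w⟫ := by
  set C : ℝ := κ * ‖d - p‖ ^ 2 + 1 / 2 * ⟪M (d - p), d - p⟫ with hC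
  have hmix : ∀ t : ℝ, t ∈ Set.Ioo (0:ℝ) 1 → (1 - t) * C ≤
      (H p - ⟪G, p⟫ + 1 / 2 * ⟪M (p - w), p - w⟫)
        - (H d + κ * ‖d - p‖ ^ 2 - ⟪G, d⟫ + 1 / 2 * ⟪M (d - w), d - w⟫) := by
    intro t ht
    set m : X := d + t • (p - d) with hm
    have hHm : H m ≤ (1 - t) * H d + t * H p := by
      have := hH.2 (Set.mem_univ d) (Set.mem_univ p) (by linarith [ht.2] : (0:ℝ) ≤ 1 - t)
        ht.1.le (by ring)
      have hmeq : (1 - t) • d + t • p = m := by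
        rw [hm]; module
      rwa [hmeq] at this
    have hnorm : ‖m - p‖ ^ 2 = (1 - t) ^ 2 * ‖d - p‖ ^ 2 := by
      have : m - p = (1 - t) • (d - p) := by rw [hm]; module
      rw [this, norm_smul, Real.norm_eq_abs, mul_pow, sq_abs]
    have hinner : ⟪G, m⟫ = ⟪G, d⟫ + t * (⟪G, p⟫ - ⟪G, d⟫) := by
      rw [hm]; simp [inner_add_right, inner_smul_right, inner_sub_right]
    -- quadratic form expansion
    have hq : ⟪M (m - w), m - w⟫ = (1 - t) * ⟪M (d - w), d - w⟫ + t * ⟪M (p - w), p - w⟫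
        - t * (1 - t) * ⟪M (d - p), d - p⟫ := by
      have e1 : m - w = (d - w) + t • (p - d) := by rw [hm]; module
      have e2 : p - w = (d - w) + (p - d) := by module
      have e3 : d - p = -(p - d) := by module
      have hsym : ∀ x z : X, ⟪M x, z⟫ = ⟪M z, x⟫ := by
        intro x z; rw [hMsa, real_inner_comm]
      rw [e1, e2, e3]
      simp only [map_add, map_smul, map_neg, inner_add_left, inner_add_right,
        inner_smul_left, inner_smul_right, inner_neg_left, inner_neg_right,
        RCLike.ofReal_real_eq_id, id_eq, starRingEnd_apply, star_trivial]
      rw [hsym (p - d) (d - w)]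
      ring
    have h0 := hmin m
    have ht1 : 0 < t := ht.1
    have hΦm : H m + κ * ‖m - p‖ ^ 2 - ⟪G, m⟫ + 1 / 2 * ⟪M (m - w), m - w⟫ ≤
        (1 - t) * (H d + κ * ‖d - p‖ ^ 2 - ⟪G, d⟫ + 1 / 2 * ⟪M (d - w), d - w⟫)
          + t * (H p - ⟪G, p⟫ + 1 / 2 * ⟪M (p - w), p - w⟫) - t * (1 - t) * C := by
      rw [hnorm, hinner, hq, hC]
      nlinarith [hHm]
    have key : t * ((1 - t) * C) ≤ t * ((H p - ⟪G, p⟫ + 1 / 2 * ⟪M (p - w), p - w⟫)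
        - (H d + κ * ‖d - p‖ ^ 2 - ⟪G, d⟫ + 1 / 2 * ⟪M (d - w), d - w⟫)) := by
      nlinarith [h0, hΦm]
    exact le_of_mul_le_mul_left key ht1
  -- take t → 0
  have htend : Filter.Tendsto (fun k : ℕ => (1 - 1 / ((k:ℝ) + 2)) * C) Filter.atTop (𝓝 C) := by
    have h1 : Filter.Tendsto (fun k : ℕ => 1 / ((k:ℝ) + 2)) Filter.atTop (𝓝 0) := by
      have := tendsto_one_div_add_atTop_nhds_zero_nat (𝕜 := ℝ)
      have h2 := this.comp (tendsto_add_atTop_nat 1)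
      convert h2 using 2 with k
      simp; ring
    have h2 : Filter.Tendsto (fun k : ℕ => 1 - 1 / ((k:ℝ) + 2)) Filter.atTop (𝓝 1) := by
      simpa using (tendsto_const_nhds : Filter.Tendsto (fun _ : ℕ => (1:ℝ)) Filter.atTop (𝓝 1)).sub h1
    simpa using h2.mul (tendsto_const_nhds : Filter.Tendsto (fun _ : ℕ => C) Filter.atTop (𝓝 C))
  have hle := le_of_tendsto' htend (fun k => hmix (1 / ((k:ℝ) + 2))
    ⟨by positivity, by rw [div_lt_one (by positivity)]; linarith [Nat.cast_nonneg (α := ℝ) k]⟩)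
  linarith [hle]

end Aux


set_option maxHeartbeats 2000000 in
/-- Lemma 3.5: the limit of the energy values `E(uⁿ)` exists. -/
theorem stmt_4
    {X : Type*} [NormedAddCommGroup X] [InnerProductSpace ℝ X] [FiniteDimensional ℝ X]
    (H F : X → ℝ) (f : X → X) (L δt : ℝ) (M : X →L[ℝ] X)
    (hH : ConvexOn ℝ Set.univ H) (hHcont : Continuous H)
    (hF : ∀ x, HasGradientAt F (f x) x)
    (hL : 0 < L) (hf : ∀ x y : X, ‖f x - f y‖ ≤ L * ‖x - y‖)
    (hδt : 0 < δt)
    (hMsa : ∀ x y : X, ⟪M x, y⟫ = ⟪x, M y⟫) (hMpsd : ∀ x : X, 0 ≤ ⟪M x, x⟫)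
    (u : ℕ → X) (β : ℕ → ℝ) (hβ : ∀ n, β n ∈ Set.Ico (0 : ℝ) 1)
    (y : ℕ → X) (hy : ∀ n, y n = u n + β n • (u n - u (n - 1)))
    (Fn : ℕ → X → ℝ)
    (hFn : ∀ n v, Fn n v = 1 / (4 * δt) * ‖v - u (n - 1)‖ ^ 2 - F v
      - ⟪f (u n) - f (u (n - 1)), v - u (n - 1)⟫)
    (g : ℕ → X → ℝ)
    (hg : ∀ n v, g n v = H v + 3 / (4 * δt) * ‖v - u n‖ ^ 2
      - ⟪gradient (Fn n) (u n), v⟫ + 1 / 2 * ⟪M (v - y n), v - y n⟫)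
    (hmin : ∀ n v, g n (u (n + 1)) ≤ g n v)
    (hδtL : δt ≤ 1 / (2 * L))
    (hEbdd : ∃ B : ℝ, ∀ x : X, B ≤ H x + F x)
    :
    ∃ ζ : ℝ, Filter.Tendsto (fun n : ℕ => H (u n) + F (u n)) Filter.atTop (nhds ζ) := by
  obtain ⟨B, hB⟩ := hEbdd
  obtain ⟨A, hA⟩ : ∃ A : ℝ, A = 1 / (4 * δt) + L / 2 := ⟨_, rfl⟩
  have hL2s : L ≤ 1 / (2 * δt) := by
    rw [le_div_iff₀ (by positivity)] at hδtL ⊢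
    nlinarith
  -- key per-step inequality
  have key : ∀ n : ℕ,
      H (u (n + 1)) + F (u (n + 1)) + A * ‖u (n + 1) - u n‖ ^ 2
        + 1 / 2 * ⟪M (u (n + 1) - u n), u (n + 1) - u n⟫
        + 1 / (4 * δt) * ‖u (n + 1) - u n‖ ^ 2
      ≤ H (u n) + F (u n) + A * ‖u n - u (n - 1)‖ ^ 2
        + 1 / 2 * ⟪M (u n - u (n - 1)), u n - u (n - 1)⟫ := by
    intro n
    set p : X := u n
    set qq : X := u (n - 1)
    set d : X := u (n + 1) with hd
    set c : X := f p - f qq with hc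
    set G : X := (1 / (2 * δt)) • (p - qq) - f p - c with hG
    -- gradient identification
    have hgrad : gradient (Fn n) (u n) = G := by
      have heq : Fn n = fun v => 1 / (4 * δt) * ‖v - qq‖ ^ 2 - F v - ⟪c, v - qq⟫ :=
        funext (hFn n)
      rw [heq]
      exact (my_fn_gradient F f δt hδt.ne' qq c p (hF p)).gradient
    -- strong convexity of the objective + minimality
    have hmin' : ∀ v : X, H d + 3 / (4 * δt) * ‖d - p‖ ^ 2 - ⟪G, d⟫
        + 1 / 2 * ⟪M (d - y n), d - y n⟫
        ≤ H v + 3 / (4 * δt) * ‖v - p‖ ^ 2 - ⟪G, v⟫ + 1 / 2 * ⟪M (v - y n), v - y n⟫ := by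
      intro v
      have := hmin n v
      rw [hg n (u (n + 1)), hg n v, hgrad] at this
      exact this
    have sc := my_strong_min H hH M hMsa (3 / (4 * δt)) G (y n) p d hmin'
    -- descent lemma
    have fd : F d ≤ F p + ⟪f p, d - p⟫ + L / 2 * ‖d - p‖ ^ 2 := my_descent F f L hF hf p d
    -- inner product expansions / bounds
    have hGsplit : ⟪G, d⟫ - ⟪G, p⟫ + ⟪f p, d - p⟫
        = 1 / (2 * δt) * ⟪p - qq, d - p⟫ - ⟪c, d - p⟫ := by
      rw [hG]
      simp [inner_sub_left, inner_sub_right, real_inner_smul_left]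
      ring
    have cs1 : 2 * ⟪p - qq, d - p⟫ ≤ ‖p - qq‖ ^ 2 + ‖d - p‖ ^ 2 := by
      nlinarith [sq_nonneg (‖(p - qq) - (d - p)‖), norm_sub_sq_real (p - qq) (d - p)]
    have cs1' : 1 / (2 * δt) * ⟪p - qq, d - p⟫
        ≤ 1 / (4 * δt) * ‖p - qq‖ ^ 2 + 1 / (4 * δt) * ‖d - p‖ ^ 2 := by
      have h := mul_le_mul_of_nonneg_left cs1 (by positivity : (0:ℝ) ≤ 1 / (4 * δt))
      calc 1 / (2 * δt) * ⟪p - qq, d - p⟫ = 1 / (4 * δt) * (2 * ⟪p - qq, d - p⟫) := by ring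
        _ ≤ 1 / (4 * δt) * (‖p - qq‖ ^ 2 + ‖d - p‖ ^ 2) := h
        _ = 1 / (4 * δt) * ‖p - qq‖ ^ 2 + 1 / (4 * δt) * ‖d - p‖ ^ 2 := by ring
    have cs2 : -⟪c, d - p⟫ ≤ L / 2 * ‖p - qq‖ ^ 2 + L / 2 * ‖d - p‖ ^ 2 := by
      have h1 : |⟪c, d - p⟫| ≤ ‖c‖ * ‖d - p‖ := abs_real_inner_le_norm c (d - p)
      have h2 : ‖c‖ ≤ L * ‖p - qq‖ := hf p qq
      have h3 : ‖c‖ * ‖d - p‖ ≤ L * ‖p - qq‖ * ‖d - p‖ :=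
        mul_le_mul_of_nonneg_right h2 (norm_nonneg _)
      have h4 : -⟪c, d - p⟫ ≤ ‖c‖ * ‖d - p‖ := by
        have := neg_abs_le (⟪c, d - p⟫ : ℝ); linarith
      nlinarith [sq_nonneg (‖p - qq‖ - ‖d - p‖), hL.le]
    -- M bounds
    have hm2 : (0:ℝ) ≤ ⟪M (d - y n), d - y n⟫ := hMpsd _
    have hm1 : ⟪M (p - y n), p - y n⟫ ≤ ⟪M (p - qq), p - qq⟫ := by
      have hpy : p - y n = -(β n • (p - qq)) := by rw [hy n]; module
      have hβn := hβ n
      rw [hpy]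
      simp only [map_neg, map_smul, inner_neg_neg, inner_smul_left, inner_smul_right,
        RCLike.ofReal_real_eq_id, id_eq, starRingEnd_apply, star_trivial]
      have h1 : (0:ℝ) ≤ ⟪M (p - qq), p - qq⟫ := hMpsd _
      have h2 : (0:ℝ) ≤ 1 - β n * β n := by nlinarith [hβn.1, hβn.2]
      nlinarith [mul_nonneg h2 h1]
    -- coefficient inequality
    have hcoef : (1 / (4 * δt) + L / 2 + L / 2 - 2 * (3 / (4 * δt))) * ‖d - p‖ ^ 2
        ≤ (-(1 / (4 * δt) + L / 2) - 1 / (4 * δt)) * ‖d - p‖ ^ 2 := by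
      apply mul_le_mul_of_nonneg_right _ (sq_nonneg _)
      have e1 : 1 / (4 * δt) = (1 / (2 * δt)) / 2 := by field_simp; ring
      have e2 : 3 / (4 * δt) = 3 / 2 * (1 / (2 * δt)) := by field_simp; ring
      rw [e1, e2]
      linarith
    have hsimp : u (n + 1) - u n = d - p := rfl
    have hsimp2 : u n - u (n - 1) = p - qq := rfl
    rw [hsimp, hsimp2, hA]
    linarith [sc, fd, hGsplit, cs1', cs2, hm1, hm2, hcoef]
  -- Lyapunov sequence
  obtain ⟨Δ, hΔdef⟩ : ∃ Δ : ℕ → X, Δ = fun n => u n - u (n - 1) := ⟨_, rfl⟩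
  obtain ⟨Lf, hLfdef⟩ : ∃ Lf : ℕ → ℝ, Lf = fun n => H (u n) + F (u n) + A * ‖Δ n‖ ^ 2
    + 1 / 2 * ⟪M (Δ n), Δ n⟫ := ⟨_, rfl⟩
  have hΔ1 : ∀ n : ℕ, Δ (n + 1) = u (n + 1) - u n := fun n => by rw [hΔdef]; simp
  have hΔn : ∀ n : ℕ, Δ n = u n - u (n - 1) := fun n => by rw [hΔdef]
  have hA0 : (0:ℝ) ≤ A := by
    rw [hA]
    have h1 : (0:ℝ) ≤ 1 / (4 * δt) := by positivity
    linarith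
  have hkey2 : ∀ n, Lf (n + 1) + 1 / (4 * δt) * ‖Δ (n + 1)‖ ^ 2 ≤ Lf n := by
    intro n
    simp only [hLfdef]
    rw [hΔ1 n, hΔn n]
    exact key n
  have hmono : Antitone Lf := by
    apply antitone_nat_of_succ_le
    intro n
    have h1 : (0:ℝ) ≤ 1 / (4 * δt) * ‖Δ (n + 1)‖ ^ 2 := by positivity
    linarith [hkey2 n]
  have hbdd : BddBelow (Set.range Lf) := by
    refine ⟨B, ?_⟩
    rintro x ⟨n, rfl⟩
    have h1 := hB (u n)
    have h2 : (0:ℝ) ≤ A * ‖Δ n‖ ^ 2 := mul_nonneg hA0 (sq_nonneg _)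
    have h3 : (0:ℝ) ≤ 1 / 2 * ⟪M (Δ n), Δ n⟫ := by
      have := hMpsd (Δ n); linarith
    simp only [hLfdef]
    linarith
  have hconv : Filter.Tendsto Lf Filter.atTop (𝓝 (⨅ n, Lf n)) :=
    tendsto_atTop_ciInf hmono hbdd
  set ζ' : ℝ := ⨅ n, Lf n with hζ'
  have hshift : Filter.Tendsto (fun n => Lf (n + 1)) Filter.atTop (𝓝 ζ') :=
    hconv.comp (tendsto_add_atTop_nat 1)
  have hdiff0 : Filter.Tendsto (fun n => Lf n - Lf (n + 1)) Filter.atTop (𝓝 0) := by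
    simpa using hconv.sub hshift
  have hsq : Filter.Tendsto (fun n => ‖Δ (n + 1)‖ ^ 2) Filter.atTop (𝓝 0) := by
    apply squeeze_zero (fun n => sq_nonneg _) (g := fun n => 4 * δt * (Lf n - Lf (n + 1)))
    · intro n
      have h := hkey2 n
      have he : ‖Δ (n + 1)‖ ^ 2 = 4 * δt * (1 / (4 * δt) * ‖Δ (n + 1)‖ ^ 2) := by
        field_simp
      rw [he]
      apply mul_le_mul_of_nonneg_left (by linarith) (by linarith)
    · simpa using hdiff0.const_mul (4 * δt)
  have hsqall : Filter.Tendsto (fun n => ‖Δ n‖ ^ 2) Filter.atTop (𝓝 0) :=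
    (tendsto_add_atTop_iff_nat 1).mp hsq
  have hnorm0 : Filter.Tendsto (fun n => ‖Δ n‖) Filter.atTop (𝓝 0) := by
    have := hsqall.sqrt
    simpa [Real.sqrt_sq (norm_nonneg _)] using this
  have hΔ0 : Filter.Tendsto Δ Filter.atTop (𝓝 0) :=
    tendsto_zero_iff_norm_tendsto_zero.mpr hnorm0
  have hqM : Filter.Tendsto (fun n => 1 / 2 * ⟪M (Δ n), Δ n⟫) Filter.atTop (𝓝 0) := by
    have hc : Continuous (fun v : X => 1 / 2 * ⟪M v, v⟫) :=
      continuous_const.mul (M.continuous.inner continuous_id)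
    have := (hc.tendsto 0).comp hΔ0
    simpa [Function.comp_def] using this
  have hAterm : Filter.Tendsto (fun n => A * ‖Δ n‖ ^ 2) Filter.atTop (𝓝 0) := by
    simpa using hsqall.const_mul A
  refine ⟨ζ', ?_⟩
  have hfin := (hconv.sub hAterm).sub hqM
  have heq : (fun n => Lf n - A * ‖Δ n‖ ^ 2 - 1 / 2 * ⟪M (Δ n), Δ n⟫)
      = fun n : ℕ => H (u n) + F (u n) := by
    funext n; simp only [hLfdef]; ring
  rw [heq] at hfin
  simpa using hfin
end

section
/- Assume 0 < δt ≤ 1/(2L) and that E is bounded below on X. If ū ∈ X is an accumulation point of the sequence (uⁿ) generated by the BapDCA_e algorithm (i.e., ū is the limit of some subsequence u^{n_i}), then ū is a critical point of E = H + F in the sense that −∇F(ū) ∈ ∂H(ū), where ∂H(ū) := {ξ ∈ X : H(z) ≥ H(ū) + ⟨ξ, z − ū⟩ for all z ∈ X}. -/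
set_option maxHeartbeats 1000000

open scoped RealInnerProductSpace
open Filter Topology

section Aux

variable {X : Type*} [NormedAddCommGroup X] [InnerProductSpace ℝ X] [CompleteSpace X]

lemma aux_t_le (K x : ℝ) (hK : 0 ≤ K) (h : ∀ t : ℝ, 0 < t → t ≤ 1 → x ≤ t * K) : x ≤ 0 := by
  rcases eq_or_lt_of_le hK with hK0 | hKpos
  · simpa [← hK0] using h 1 one_pos le_rfl
  · refine le_of_forall_pos_le_add fun ε hε => ?_
    have ht : (0:ℝ) < min 1 (ε / K) := lt_min one_pos (div_pos hε hKpos)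
    have := h _ ht (min_le_left _ _)
    have h2 : min 1 (ε / K) * K ≤ ε := by
      calc min 1 (ε / K) * K ≤ (ε / K) * K :=
            mul_le_mul_of_nonneg_right (min_le_right _ _) hK
        _ = ε := by field_simp
    linarith

lemma aux_grad [CompleteSpace X] (c1 : ℝ) (a b x : X) (F : X → ℝ) (fx : X)
    (hF : HasGradientAt F fx x) :
    HasGradientAt (fun v => c1 * ‖v - a‖^2 - F v - ⟪b, v - a⟫) ((2*c1) • (x - a) - fx - b) x := by
  have h1 : HasFDerivAt (fun v : X => ‖v - a‖^2) (2 • (innerSL ℝ (x - a))) x := by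
    simpa using ((hasFDerivAt_id x).sub_const a).norm_sq
  have h2 := h1.const_mul c1
  have h3 : HasFDerivAt F (InnerProductSpace.toDual ℝ X fx) x := hF.hasFDerivAt
  have h4 : HasFDerivAt (fun v : X => ⟪b, v - a⟫) (InnerProductSpace.toDual ℝ X b) x := by
    have h := ((InnerProductSpace.toDual ℝ X b).hasFDerivAt (x := x)).sub_const ⟪b, a⟫
    refine h.congr_of_eventuallyEq ?_
    filter_upwards with v
    simp [inner_sub_right]
  have hD := (h2.sub h3).sub h4
  rw [hasGradientAt_iff_hasFDerivAt]
  have heq : InnerProductSpace.toDual ℝ X ((2*c1) • (x - a) - fx - b)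
      = (c1 • (2 • (innerSL ℝ (x - a))) - InnerProductSpace.toDual ℝ X fx)
        - InnerProductSpace.toDual ℝ X b := by
    ext w
    simp [inner_sub_left, real_inner_smul_left]
    ring
  rw [heq]
  exact hD

lemma aux_descent (F : X → ℝ) (f : X → X) (L : ℝ)
    (hF : ∀ x, HasGradientAt F (f x) x) (hf : ∀ x y, ‖f x - f y‖ ≤ L * ‖x - y‖) (a b : X) :
    F b ≤ F a + ⟪f a, b - a⟫ + L/2 * ‖b - a‖^2 := by
  set d := b - a with hd
  set ψ : ℝ → ℝ := fun t => F (a + t • d) - t * ⟪f a, d⟫ - t^2 * (L/2 * ‖d‖^2) with hψ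
  have hline : ∀ t : ℝ, HasDerivAt (fun s : ℝ => a + s • d) d t := by
    intro t
    simpa using ((hasDerivAt_id t).smul_const d).const_add a
  have hψd : ∀ t : ℝ, HasDerivAt ψ
      (⟪f (a + t • d), d⟫ - ⟪f a, d⟫ - 2 * t * (L/2 * ‖d‖^2)) t := by
    intro t
    have hFc : HasDerivAt (fun s : ℝ => F (a + s • d)) ⟪f (a + t • d), d⟫ t := by
      have := ((hF (a + t • d)).hasFDerivAt).comp_hasDerivAt t (hline t)
      simp at this; exact this
    have h1 : HasDerivAt (fun s : ℝ => s * ⟪f a, d⟫) ⟪f a, d⟫ t := by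
      simpa using (hasDerivAt_id t).mul_const (⟪f a, d⟫ : ℝ)
    have h2 : HasDerivAt (fun s : ℝ => s^2 * (L/2 * ‖d‖^2)) (2 * t * (L/2 * ‖d‖^2)) t := by
      have := (hasDerivAt_pow 2 t).mul_const (L/2 * ‖d‖^2)
      simpa [mul_comm] using this
    exact (hFc.sub h1).sub h2
  have hanti : AntitoneOn ψ (Set.Icc 0 1) := by
    apply antitoneOn_of_deriv_nonpos (convex_Icc 0 1)
    · have hdiff : Differentiable ℝ ψ := fun t => (hψd t).differentiableAt
      exact hdiff.continuous.continuousOn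
    · intro t _
      exact (hψd t).differentiableAt.differentiableWithinAt
    · intro t ht
      rw [interior_Icc] at ht
      rw [(hψd t).deriv]
      have hcs : ⟪f (a + t • d) - f a, d⟫ ≤ ‖f (a + t • d) - f a‖ * ‖d‖ :=
        real_inner_le_norm _ _
      have hlip : ‖f (a + t • d) - f a‖ ≤ L * (t * ‖d‖) := by
        have := hf (a + t • d) a
        rw [show (a + t • d) - a = t • d by abel, norm_smul, Real.norm_eq_abs,
          abs_of_pos ht.1] at this
        exact this
      have hd2 : ⟪f (a + t • d) - f a, d⟫ ≤ L * t * ‖d‖^2 := by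
        calc ⟪f (a + t • d) - f a, d⟫ ≤ ‖f (a + t • d) - f a‖ * ‖d‖ := hcs
          _ ≤ (L * (t * ‖d‖)) * ‖d‖ := mul_le_mul_of_nonneg_right hlip (norm_nonneg d)
          _ = L * t * ‖d‖^2 := by ring
      have : ⟪f (a + t • d), d⟫ - ⟪f a, d⟫ ≤ L * t * ‖d‖^2 := by
        rw [← inner_sub_left]; exact hd2
      linarith
  have h01 : ψ 1 ≤ ψ 0 := hanti (Set.mem_Icc.2 ⟨le_rfl, zero_le_one⟩)
    (Set.mem_Icc.2 ⟨zero_le_one, le_rfl⟩) zero_le_one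
  have hψ0 : ψ 0 = F a := by simp [hψ]
  have hψ1 : ψ 1 = F b - ⟪f a, d⟫ - L/2 * ‖d‖^2 := by simp [hψ, hd]
  rw [hψ0, hψ1] at h01
  linarith

lemma aux_quad_conv (M : X →L[ℝ] X) (hMsa : ∀ x y : X, ⟪M x, y⟫ = ⟪x, M y⟫)
    (a b w : X) (t : ℝ) :
    ⟪M ((a + t • (b - a)) - w), (a + t • (b - a)) - w⟫
      = (1-t) * ⟪M (a - w), a - w⟫ + t * ⟪M (b - w), b - w⟫
        - t * (1-t) * ⟪M (a - b), a - b⟫ := by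
  set p := a - w
  set q := b - w
  have hpq : (a + t • (b - a)) - w = p + t • (q - p) := by
    simp only [p, q]; module
  have hab : a - b = p - q := by simp only [p, q]; abel
  have hsym : ∀ x y : X, ⟪M x, y⟫ = ⟪M y, x⟫ := by
    intro x y; rw [hMsa, real_inner_comm]
  rw [hpq, hab]
  have hexp : M (p + t • (q - p)) = M p + t • (M q - M p) := by
    simp [map_add, map_smul, map_sub]
  have hexp2 : M (p - q) = M p - M q := by simp [map_sub]
  rw [hexp, hexp2]
  simp only [inner_add_left, inner_add_right, inner_sub_left, inner_sub_right,
    real_inner_smul_left, real_inner_smul_right, smul_sub]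
  rw [hsym q p]
  ring

lemma aux_norm_conv (a b w : X) (t : ℝ) :
    ‖(a + t • (b - a)) - w‖^2
      = (1-t) * ‖a - w‖^2 + t * ‖b - w‖^2 - t * (1-t) * ‖a - b‖^2 := by
  have := aux_quad_conv (ContinuousLinearMap.id ℝ X) (by intro x y; rfl) a b w t
  simpa [real_inner_self_eq_norm_sq] using this

lemma aux_M_expand (M : X →L[ℝ] X) (hMsa : ∀ x y : X, ⟪M x, y⟫ = ⟪x, M y⟫)
    (p q : X) (s : ℝ) :
    ⟪M (p - s • q), p - s • q⟫ = ⟪M p, p⟫ - 2*s*⟪M p, q⟫ + s^2*⟪M q, q⟫ := by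
  have hsym : ⟪M q, p⟫ = ⟪M p, q⟫ := by rw [hMsa, real_inner_comm]
  have hexp : M (p - s • q) = M p - s • M q := by simp [map_sub, map_smul]
  rw [hexp]
  simp only [inner_sub_left, inner_sub_right, real_inner_smul_left, real_inner_smul_right]
  rw [hsym]
  ring

lemma aux_strong (δt : ℝ) (hδt : 0 < δt) (H : X → ℝ) (hH : ConvexOn ℝ Set.univ H)
    (M : X →L[ℝ] X) (hMsa : ∀ x y : X, ⟪M x, y⟫ = ⟪x, M y⟫) (hMpsd : ∀ x : X, 0 ≤ ⟪M x, x⟫)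
    (c' yn un : X) (g : X → ℝ)
    (hg : ∀ v, g v = H v + 3/(4*δt) * ‖v - un‖^2 - ⟪c', v⟫ + 1/2 * ⟪M (v - yn), v - yn⟫)
    (a : X) (hmin : ∀ v, g a ≤ g v) (v : X) :
    g a + (3/(4*δt) * ‖a - v‖^2 + 1/2 * ⟪M (a - v), a - v⟫) ≤ g v := by
  set S : ℝ := 3/(4*δt) * ‖a - v‖^2 + 1/2 * ⟪M (a - v), a - v⟫ with hS
  have hSnn : 0 ≤ S := by
    have h1 : 0 ≤ 3/(4*δt) * ‖a - v‖^2 := by positivity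
    have h2 := hMpsd (a - v)
    rw [hS]; linarith
  have key : ∀ t : ℝ, 0 < t → t ≤ 1 → g a + S - g v ≤ t * S := by
    intro t ht ht1
    have hHc : H (a + t • (v - a)) ≤ (1-t) * H a + t * H v := by
      have := hH.2 (Set.mem_univ a) (Set.mem_univ v) (by linarith : (0:ℝ) ≤ 1 - t)
        (le_of_lt ht) (by ring)
      have heq : (1-t) • a + t • v = a + t • (v - a) := by module
      rw [heq] at this
      simpa [smul_eq_mul] using this
    have hlin : ⟪c', a + t • (v - a)⟫ = (1-t) * ⟪c', a⟫ + t * ⟪c', v⟫ := by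
      simp only [inner_add_right, inner_sub_right, real_inner_smul_right]
      ring
    have hq1 := aux_norm_conv a v un t
    have hq2 := aux_quad_conv M hMsa a v yn t
    have hgt : g (a + t • (v - a)) ≤ (1-t) * g a + t * g v - t * (1-t) * S := by
      rw [hg, hg, hg, hq1, hq2, hlin, hS]
      nlinarith [hHc]
    have hm := hmin (a + t • (v - a))
    have h2 : t * (g a + S - g v) ≤ t * (t * S) := by nlinarith [hgt, hm]
    exact le_of_mul_le_mul_left (by linarith [h2]) ht
  linarith [aux_t_le S (g a + S - g v) hSnn key]

end Aux


/-- Proposition 3.4: any accumulation point of the BapDCA_e iterates is a critical point of `E = H + F`, i.e. `−∇F(ū) ∈ ∂H(ū)`. -/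
theorem stmt_5
    {X : Type*} [NormedAddCommGroup X] [InnerProductSpace ℝ X] [FiniteDimensional ℝ X]
    (H F : X → ℝ) (f : X → X) (L δt : ℝ) (M : X →L[ℝ] X)
    (hH : ConvexOn ℝ Set.univ H) (hHcont : Continuous H)
    (hF : ∀ x, HasGradientAt F (f x) x)
    (hL : 0 < L) (hf : ∀ x y : X, ‖f x - f y‖ ≤ L * ‖x - y‖)
    (hδt : 0 < δt)
    (hMsa : ∀ x y : X, ⟪M x, y⟫ = ⟪x, M y⟫) (hMpsd : ∀ x : X, 0 ≤ ⟪M x, x⟫)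
    (u : ℕ → X) (β : ℕ → ℝ) (hβ : ∀ n, β n ∈ Set.Ico (0 : ℝ) 1)
    (y : ℕ → X) (hy : ∀ n, y n = u n + β n • (u n - u (n - 1)))
    (Fn : ℕ → X → ℝ)
    (hFn : ∀ n v, Fn n v = 1 / (4 * δt) * ‖v - u (n - 1)‖ ^ 2 - F v
      - ⟪f (u n) - f (u (n - 1)), v - u (n - 1)⟫)
    (g : ℕ → X → ℝ)
    (hg : ∀ n v, g n v = H v + 3 / (4 * δt) * ‖v - u n‖ ^ 2
      - ⟪gradient (Fn n) (u n), v⟫ + 1 / 2 * ⟪M (v - y n), v - y n⟫)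
    (hmin : ∀ n v, g n (u (n + 1)) ≤ g n v)
    (hδtL : δt ≤ 1 / (2 * L))
    (hEbdd : ∃ B : ℝ, ∀ x : X, B ≤ H x + F x)
    (ub : X) (φ : ℕ → ℕ) (hφ : StrictMono φ)
    (hacc : Filter.Tendsto (fun i => u (φ i)) Filter.atTop (nhds ub))
    :
    ∀ z : X, H ub + ⟪-(f ub), z - ub⟫ ≤ H z := by
  -- gradient of Fn n at u n
  have hgrad : ∀ n, gradient (Fn n) (u n)
      = (1/(2*δt)) • (u n - u (n-1)) - f (u n) - (f (u n) - f (u (n-1))) := by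
    intro n
    have hfn : Fn n = fun v => 1/(4*δt) * ‖v - u (n-1)‖^2 - F v
        - ⟪f (u n) - f (u (n-1)), v - u (n-1)⟫ := funext (fun v => by rw [hFn n v])
    rw [hfn]
    have hga := aux_grad (1/(4*δt)) (u (n-1)) (f (u n) - f (u (n-1))) (u n) F (f (u n)) (hF (u n))
    rw [hga.gradient]
    congr 2
    · rw [show (2*(1/(4*δt))) = 1/(2*δt) by ring]
  -- strong minimality
  have hstrong : ∀ n v, g n (u (n+1))
      + (3/(4*δt) * ‖u (n+1) - v‖^2 + 1/2 * ⟪M (u (n+1) - v), u (n+1) - v⟫) ≤ g n v := by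
    intro n v
    refine aux_strong δt hδt H hH M hMsa hMpsd (gradient (Fn n) (u n)) (y n) (u n) (g n)
      (fun w => by rw [hg n w]) (u (n+1)) (hmin n) v
  -- differences
  set d : ℕ → X := fun n => u n - u (n-1) with hd
  have hd1 : ∀ n : ℕ, d (n+1) = u (n+1) - u n := by intro n; simp [hd]
  have hum : ∀ n : ℕ, u (n-1) = u n - d n := by intro n; simp [hd]
  have h2L : 2*L ≤ 1/δt := by
    rw [le_div_iff₀ hδt]
    rw [le_div_iff₀ (by positivity : (0:ℝ) < 2*L)] at hδtL
    linarith
  have hε : 0 < 1/δt - 3*L/2 := by linarith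
  -- Lyapunov decrease
  set Λ : ℕ → ℝ := fun n => H (u n) + F (u n) + (1/(4*δt) + L/2) * ‖d n‖^2
    + 1/2 * ⟪M (d n), d n⟫ with hΛ
  have hdec : ∀ n, Λ (n+1) + (1/δt - 3*L/2) * ‖d (n+1)‖^2 ≤ Λ n := by
    intro n
    have hstr := hstrong n (u n)
    rw [hg n (u (n+1)), hg n (u n), hgrad n] at hstr
    have hdes := aux_descent F f L hF hf (u n) (u (n+1))
    set p := u (n+1) - u n with hp
    set q := u n - u (n-1) with hq
    have hay : u (n+1) - y n = p - β n • q := by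
      rw [hy n, hp, hq]; abel
    have hby : u n - y n = -(β n • q) := by
      rw [hy n, hq]; abel
    rw [hay, hby] at hstr
    simp only [sub_self, norm_zero] at hstr
    have hM1 : ⟪M (p - β n • q), p - β n • q⟫
        = ⟪M p, p⟫ - 2*(β n)*⟪M p, q⟫ + (β n)^2*⟪M q, q⟫ := aux_M_expand M hMsa p q (β n)
    have hM2 : ⟪M (-(β n • q)), -(β n • q)⟫ = (β n)^2 * ⟪M q, q⟫ := by
      have h0 := aux_M_expand M hMsa 0 q (β n)
      simpa using h0
    rw [hM1, hM2] at hstr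
    have hclin : ⟪(1/(2*δt)) • q - f (u n) - (f (u n) - f (u (n-1))), u (n+1)⟫
        - ⟪(1/(2*δt)) • q - f (u n) - (f (u n) - f (u (n-1))), u n⟫
        = 1/(2*δt) * ⟪q, p⟫ - ⟪f (u n), p⟫ - ⟪f (u n) - f (u (n-1)), p⟫ := by
      rw [← inner_sub_right]
      simp only [← hp, inner_sub_left, real_inner_smul_left]
    have hqp : 1/(2*δt) * ⟪q, p⟫ ≤ 1/(4*δt)*‖q‖^2 + 1/(4*δt)*‖p‖^2 := by
      have h1 : ⟪q, p⟫ ≤ 1/2*‖q‖^2 + 1/2*‖p‖^2 := by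
        nlinarith [real_inner_le_norm q p, sq_nonneg (‖q‖ - ‖p‖)]
      have h2 : (0:ℝ) < 1/(2*δt) := by positivity
      calc 1/(2*δt) * ⟪q, p⟫ ≤ 1/(2*δt) * (1/2*‖q‖^2 + 1/2*‖p‖^2) :=
            mul_le_mul_of_nonneg_left h1 h2.le
        _ = 1/(4*δt)*‖q‖^2 + 1/(4*δt)*‖p‖^2 := by ring
    have hfp : -⟪f (u n) - f (u (n-1)), p⟫ ≤ L/2*‖q‖^2 + L/2*‖p‖^2 := by
      have h1 : -⟪f (u n) - f (u (n-1)), p⟫ ≤ ‖f (u n) - f (u (n-1))‖ * ‖p‖ := by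
        rw [← inner_neg_left]
        calc ⟪-(f (u n) - f (u (n-1))), p⟫ ≤ ‖-(f (u n) - f (u (n-1)))‖ * ‖p‖ :=
              real_inner_le_norm _ _
          _ = ‖f (u n) - f (u (n-1))‖ * ‖p‖ := by rw [norm_neg]
      have h2 : ‖f (u n) - f (u (n-1))‖ * ‖p‖ ≤ (L * ‖q‖) * ‖p‖ := by
        refine mul_le_mul_of_nonneg_right ?_ (norm_nonneg p)
        rw [hq]; exact hf (u n) (u (n-1))
      have h3 : (L * ‖q‖) * ‖p‖ ≤ L/2*‖q‖^2 + L/2*‖p‖^2 := by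
        nlinarith [mul_nonneg (by positivity : (0:ℝ) ≤ L/2) (sq_nonneg (‖q‖ - ‖p‖))]
      linarith
    have hMc : β n * ⟪M p, q⟫ ≤ 1/2*⟪M p, p⟫ + 1/2*((β n)^2*⟪M q, q⟫) := by
      have h0 := hMpsd (p - β n • q)
      rw [aux_M_expand M hMsa p q (β n)] at h0
      linarith
    have hMq : (β n)^2 * ⟪M q, q⟫ ≤ ⟪M q, q⟫ := by
      have hb := hβ n
      have h1 : (β n)^2 ≤ 1 := by nlinarith [hb.1, hb.2]
      nlinarith [hMpsd q]
    have hdq : d n = q := hq.symm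
    have hdp : d (n+1) = p := by rw [hd1 n, hp]
    simp only [hΛ, hdq, hdp]
    ring_nf at hstr hclin hqp hdes hfp hMc hMq ⊢
    linarith [hstr, hdes, hclin, hqp, hfp, hMc, hMq]
  obtain ⟨B, hB⟩ := hEbdd
  have hΛanti : Antitone Λ := antitone_nat_of_succ_le (fun n => by
    have h1 := hdec n
    have h2 : 0 ≤ (1/δt - 3*L/2) * ‖d (n+1)‖^2 := mul_nonneg hε.le (sq_nonneg _)
    exact le_trans (le_add_of_nonneg_right h2) h1)
  have hΛbdd : ∀ n, B ≤ Λ n := fun n => by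
    have h1 := hB (u n)
    have h2 : 0 ≤ (1/(4*δt) + L/2) * ‖d n‖^2 := by positivity
    have h3 := hMpsd (d n)
    simp only [hΛ]; linarith
  have hΛconv : Tendsto Λ atTop (𝓝 (⨅ n, Λ n)) :=
    tendsto_atTop_ciInf hΛanti ⟨B, by rintro x ⟨n, rfl⟩; exact hΛbdd n⟩
  have hΛshift : Tendsto (fun n => Λ (n+1)) atTop (𝓝 (⨅ n, Λ n)) :=
    hΛconv.comp (tendsto_add_atTop_nat 1)
  have hgap : Tendsto (fun n => Λ n - Λ (n+1)) atTop (𝓝 0) := by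
    have h0 := hΛconv.sub hΛshift
    simpa using h0
  have hsq1 : Tendsto (fun n => (1/δt - 3*L/2) * ‖d (n+1)‖^2) atTop (𝓝 0) := by
    refine squeeze_zero (fun n => mul_nonneg hε.le (sq_nonneg _)) (fun n => ?_) hgap
    linarith [hdec n]
  have hsq : Tendsto (fun n => ‖d (n+1)‖^2) atTop (𝓝 0) := by
    have heq : (fun n => ‖d (n+1)‖^2)
        = fun n => (1/δt - 3*L/2)⁻¹ * ((1/δt - 3*L/2) * ‖d (n+1)‖^2) := by
      funext n; rw [inv_mul_cancel_left₀ hε.ne']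
    rw [heq]
    simpa using hsq1.const_mul (1/δt - 3*L/2)⁻¹
  have hsqall : Tendsto (fun n => ‖d n‖^2) atTop (𝓝 0) :=
    (tendsto_add_atTop_iff_nat 1).mp hsq
  have hnrm : Tendsto (fun n => ‖d n‖) atTop (𝓝 0) := by
    have heq : (fun n => ‖d n‖) = fun n => Real.sqrt (‖d n‖^2) := by
      funext n; rw [Real.sqrt_sq (norm_nonneg _)]
    rw [heq]
    have h0 := (Real.continuous_sqrt.tendsto 0).comp hsqall
    simpa [Function.comp_def] using h0
  have hd0 : Tendsto d atTop (𝓝 0) := tendsto_zero_iff_norm_tendsto_zero.mpr hnrm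
  -- subsequence limits
  have hφ' : Tendsto φ atTop atTop := hφ.tendsto_atTop
  have hdφ : Tendsto (fun i => d (φ i)) atTop (𝓝 0) := hd0.comp hφ'
  have hφ1 : Tendsto (fun i => φ i + 1) atTop atTop := (tendsto_add_atTop_nat 1).comp hφ'
  have hdφ1 : Tendsto (fun i => d (φ i + 1)) atTop (𝓝 0) := hd0.comp hφ1
  have hu1 : Tendsto (fun i => u (φ i + 1)) atTop (𝓝 ub) := by
    have heq : (fun i => u (φ i + 1)) = fun i => u (φ i) + d (φ i + 1) := by
      funext i; rw [hd1 (φ i)]; abel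
    rw [heq]
    simpa using hacc.add hdφ1
  have hum1 : Tendsto (fun i => u (φ i - 1)) atTop (𝓝 ub) := by
    have heq : (fun i => u (φ i - 1)) = fun i => u (φ i) - d (φ i) := by
      funext i; rw [hum (φ i)]
    rw [heq]
    simpa using hacc.sub hdφ
  have hyφ : Tendsto (fun i => y (φ i)) atTop (𝓝 ub) := by
    have hb : Tendsto (fun i => β (φ i) • d (φ i)) atTop (𝓝 0) := by
      refine squeeze_zero_norm (fun i => ?_) (by simpa using hdφ.norm)
      rw [norm_smul, Real.norm_eq_abs, abs_of_nonneg (hβ (φ i)).1]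
      nlinarith [norm_nonneg (d (φ i)), (hβ (φ i)).1, (hβ (φ i)).2.le]
    have heq : (fun i => y (φ i)) = fun i => u (φ i) + β (φ i) • d (φ i) := by
      funext i; rw [hy (φ i)]
    rw [heq]
    simpa using hacc.add hb
  have hfc : Continuous f := by
    have hlip : LipschitzWith (Real.toNNReal L) f := by
      apply LipschitzWith.of_dist_le_mul
      intro a b
      rw [dist_eq_norm, dist_eq_norm, Real.coe_toNNReal L hL.le]
      exact hf a b
    exact hlip.continuous
  intro z
  have claim : ∀ w : X, H ub + ⟪f ub, ub - w⟫
      ≤ H w + 3/(4*δt) * ‖w - ub‖^2 + 1/2 * ⟪M (w - ub), w - ub⟫ := by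
    intro w
    set T : X × X × X × X → ℝ := fun s =>
      H s.1 + 3/(4*δt) * ‖s.1 - s.2.1‖^2
        - ⟪(1/(2*δt)) • (s.2.1 - s.2.2.1) - f s.2.1 - (f s.2.1 - f s.2.2.1), s.1 - w⟫
        + 1/2 * ⟪M (s.1 - s.2.2.2), s.1 - s.2.2.2⟫
        - (H w + 3/(4*δt) * ‖w - s.2.1‖^2 + 1/2 * ⟪M (w - s.2.2.2), w - s.2.2.2⟫) with hT
    have c1 : Continuous (fun s : X × X × X × X => s.1) := continuous_fst
    have c2 : Continuous (fun s : X × X × X × X => s.2.1) := continuous_fst.comp continuous_snd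
    have c3 : Continuous (fun s : X × X × X × X => s.2.2.1) :=
      continuous_fst.comp (continuous_snd.comp continuous_snd)
    have c4 : Continuous (fun s : X × X × X × X => s.2.2.2) :=
      continuous_snd.comp (continuous_snd.comp continuous_snd)
    have cC : Continuous (fun s : X × X × X × X =>
        (1/(2*δt)) • (s.2.1 - s.2.2.1) - f s.2.1 - (f s.2.1 - f s.2.2.1)) :=
      (((c2.sub c3).const_smul (1/(2*δt))).sub (hfc.comp c2)).sub
        ((hfc.comp c2).sub (hfc.comp c3))
    have hTcont : Continuous T := by
      rw [hT]
      exact ((((hHcont.comp c1).add (continuous_const.mul (((c1.sub c2).norm).pow 2))).sub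
          (cC.inner (c1.sub continuous_const))).add (continuous_const.mul
            ((M.continuous.comp (c1.sub c4)).inner (c1.sub c4)))).sub
        ((continuous_const.add (continuous_const.mul (((continuous_const.sub c2)).norm.pow 2))).add
          (continuous_const.mul ((M.continuous.comp (continuous_const.sub c4)).inner
            (continuous_const.sub c4))))
    have hseq : Tendsto (fun i => ((u (φ i + 1), u (φ i), u (φ i - 1), y (φ i)) : X × X × X × X))
        atTop (𝓝 (ub, ub, ub, ub)) :=
      hu1.prodMk_nhds (hacc.prodMk_nhds (hum1.prodMk_nhds hyφ))
    have hTle : ∀ i, T (u (φ i + 1), u (φ i), u (φ i - 1), y (φ i)) ≤ 0 := by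
      intro i
      have hm := hmin (φ i) w
      rw [hg (φ i) (u (φ i + 1)), hg (φ i) w, hgrad (φ i)] at hm
      simp only [hT]
      rw [inner_sub_right]
      linarith [hm]
    have hlim : T (ub, ub, ub, ub) ≤ 0 :=
      le_of_tendsto ((hTcont.tendsto _).comp hseq) (Filter.Eventually.of_forall hTle)
    simp only [hT, sub_self, smul_zero, zero_sub, norm_zero, map_zero,
      inner_zero_left, inner_zero_right] at hlim
    rw [sub_zero, inner_neg_left] at hlim
    norm_num at hlim
    rw [map_sub]
    linarith [hlim]
  set K : ℝ := 3/(4*δt) * ‖z - ub‖^2 + 1/2 * ⟪M (z - ub), z - ub⟫ with hK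
  have hKnn : 0 ≤ K := by
    have h1 : (0:ℝ) ≤ 3/(4*δt) * ‖z - ub‖^2 := by positivity
    have h2 := hMpsd (z - ub)
    rw [hK]; linarith
  have key : ∀ t : ℝ, 0 < t → t ≤ 1 → H ub + ⟪-(f ub), z - ub⟫ - H z ≤ t * K := by
    intro t ht ht1
    have hcl := claim (ub + t • (z - ub))
    have hHc : H (ub + t • (z - ub)) ≤ (1-t) * H ub + t * H z := by
      have h0 := hH.2 (Set.mem_univ ub) (Set.mem_univ z) (by linarith : (0:ℝ) ≤ 1-t) ht.le
        (by ring)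
      have heq : (1-t) • ub + t • z = ub + t • (z - ub) := by module
      rw [heq] at h0
      simpa [smul_eq_mul] using h0
    have h1 : ub - (ub + t • (z - ub)) = -(t • (z - ub)) := by abel
    have h2 : (ub + t • (z - ub)) - ub = t • (z - ub) := by abel
    rw [h1, h2] at hcl
    have h3 : ⟪f ub, -(t • (z - ub))⟫ = -(t * ⟪f ub, z - ub⟫) := by
      rw [inner_neg_right, real_inner_smul_right]
    have h4 : ‖t • (z - ub)‖^2 = t^2 * ‖z - ub‖^2 := by
      rw [norm_smul, mul_pow, Real.norm_eq_abs, sq_abs]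
    have h5 : ⟪M (t • (z - ub)), t • (z - ub)⟫ = t^2 * ⟪M (z - ub), z - ub⟫ := by
      rw [map_smul, real_inner_smul_left, real_inner_smul_right]; ring
    rw [h3, h4, h5] at hcl
    have h6 : ⟪-(f ub), z - ub⟫ = -⟪f ub, z - ub⟫ := inner_neg_left _ _
    rw [h6]
    have h7 : t * (H ub - ⟪f ub, z - ub⟫ - H z) ≤ t * (t * K) := by
      rw [hK]; nlinarith [hcl, hHc]
    have h8 := le_of_mul_le_mul_left (by linarith [h7] :
      t * (H ub - ⟪f ub, z - ub⟫ - H z) ≤ t * (t * K)) ht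
    linarith [h8]
  linarith [aux_t_le K _ hKnn key]
end

section
/- There exists a constant D > 0 such that for every n ≥ 0 there exists ξ^{n+1} ∈ ∂H(u^{n+1}) with ‖ξ^{n+1} + f(u^{n+1}) + C_M(u^{n+1} − uⁿ)‖ + ‖C_M(u^{n+1} − uⁿ)‖ ≤ D·(‖u^{n+1} − uⁿ‖ + ‖uⁿ − u^{n−1}‖). In particular, dist((0,0), ∂A(u^{n+1}, uⁿ)) ≤ D·(‖u^{n+1} − uⁿ‖ + ‖uⁿ − u^{n−1}‖) for all n. -/
open scoped RealInnerProductSpace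
open Filter Topology

section Aux
variable {X : Type*} [NormedAddCommGroup X] [InnerProductSpace ℝ X]

lemma sq_expand' (x v : X) (t : ℝ) :
    ‖x + t • v‖ ^ 2 = ‖x‖ ^ 2 + 2 * t * ⟪x, v⟫ + t ^ 2 * ‖v‖ ^ 2 := by
  rw [norm_add_sq_real, real_inner_smul_right, norm_smul, Real.norm_eq_abs, mul_pow, sq_abs]
  ring

lemma subgrad_of_min (H φ : X → ℝ) (hH : ConvexOn ℝ Set.univ H)
    (w Gw : X) (Q : X → ℝ) (hQ : ∀ v, 0 ≤ Q v)
    (hexp : ∀ (v : X) (t : ℝ), φ (w + t • v) = φ w + t * ⟪Gw, v⟫ + t ^ 2 * Q v)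
    (hmin : ∀ v, H w + φ w ≤ H v + φ v) :
    ∀ z, H w + ⟪-Gw, z - w⟫ ≤ H z := by
  intro z
  rw [inner_neg_left]
  have key : ∀ t : ℝ, 0 < t → t ≤ 1 → H w ≤ H z + ⟪Gw, z - w⟫ + t * Q (z - w) := by
    intro t ht ht1
    have hconv := hH.2 (Set.mem_univ w) (Set.mem_univ z) (by linarith : (0:ℝ) ≤ 1 - t) ht.le
      (by ring)
    have heq : (1 - t) • w + t • z = w + t • (z - w) := by module
    rw [heq] at hconv
    simp only [smul_eq_mul] at hconv
    have h2 := hmin (w + t • (z - w))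
    rw [hexp (z - w) t] at h2
    have h3 : t * H w ≤ t * (H z + ⟪Gw, z - w⟫ + t * Q (z - w)) := by nlinarith
    exact le_of_mul_le_mul_left h3 ht
  have hgoal : ∀ ε : ℝ, 0 < ε → H w + -⟪Gw, z - w⟫ ≤ H z + ε := by
    intro ε hε
    set q := Q (z - w) with hq
    have hq0 : 0 ≤ q := hQ _
    have ht0 : 0 < min 1 (ε / (q + 1)) := lt_min one_pos (div_pos hε (by linarith))
    have := key _ ht0 (min_le_left _ _)
    have htq : min 1 (ε / (q + 1)) * q ≤ ε := by
      have h1 : min 1 (ε / (q + 1)) * q ≤ (ε / (q + 1)) * q :=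
        mul_le_mul_of_nonneg_right (min_le_right _ _) hq0
      have h2 : (ε / (q + 1)) * (q + 1) = ε := by field_simp
      nlinarith [div_pos hε (show (0:ℝ) < q + 1 by linarith)]
    linarith
  exact le_of_forall_pos_le_add hgoal

lemma phi_expand (M : X →L[ℝ] X) (hMsa : ∀ x y : X, ⟪M x, y⟫ = ⟪x, M y⟫)
    (r : ℝ) (a yn c w v : X) (t : ℝ) :
    (r * ‖(w + t • v) - a‖ ^ 2 - ⟪c, w + t • v⟫
        + 1 / 2 * ⟪M ((w + t • v) - yn), (w + t • v) - yn⟫)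
      = (r * ‖w - a‖ ^ 2 - ⟪c, w⟫ + 1 / 2 * ⟪M (w - yn), w - yn⟫)
        + t * ⟪(2 * r) • (w - a) - c + M (w - yn), v⟫
        + t ^ 2 * (r * ‖v‖ ^ 2 + 1 / 2 * ⟪M v, v⟫) := by
  have e1 : (w + t • v) - a = (w - a) + t • v := by abel
  have e2 : (w + t • v) - yn = (w - yn) + t • v := by abel
  have hsym : ⟪M v, w - yn⟫ = ⟪M (w - yn), v⟫ := by
    rw [hMsa]; exact real_inner_comm _ _
  have hc : (⟪c, w + t • v⟫ : ℝ) = ⟪c, w⟫ + t * ⟪c, v⟫ := by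
    rw [inner_add_right, real_inner_smul_right]
  have hM2 : (⟪M ((w - yn) + t • v), (w - yn) + t • v⟫ : ℝ)
      = ⟪M (w - yn), w - yn⟫ + 2 * (t * ⟪M (w - yn), v⟫) + t ^ 2 * ⟪M v, v⟫ := by
    simp only [map_add, map_smul, inner_add_left, inner_add_right,
      real_inner_smul_left, real_inner_smul_right]
    rw [hsym]; ring
  rw [e1, e2, sq_expand', hc, hM2]
  simp only [inner_add_left, inner_sub_left, real_inner_smul_left]
  ring

omit [InnerProductSpace ℝ X] in
lemma norm_add4_le (a b c d : X) : ‖a + b + c + d‖ ≤ ‖a‖ + ‖b‖ + ‖c‖ + ‖d‖ := by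
  refine le_trans (norm_add_le _ _) (add_le_add_left ?_ _)
  exact le_trans (norm_add_le _ _) (add_le_add_left (norm_add_le _ _) _)

end Aux

/-- bound on the subgradients of `A` along the iterates: `dist((0,0), ∂A(u^{n+1},uⁿ)) ≤ D(‖u^{n+1}−uⁿ‖ + ‖uⁿ−u^{n−1}‖)`. -/
theorem stmt_6
    {X : Type*} [NormedAddCommGroup X] [InnerProductSpace ℝ X] [FiniteDimensional ℝ X]
    (H F : X → ℝ) (f : X → X) (L δt : ℝ) (M : X →L[ℝ] X)
    (hH : ConvexOn ℝ Set.univ H) (hHcont : Continuous H)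
    (hF : ∀ x, HasGradientAt F (f x) x)
    (hL : 0 < L) (hf : ∀ x y : X, ‖f x - f y‖ ≤ L * ‖x - y‖)
    (hδt : 0 < δt)
    (hMsa : ∀ x y : X, ⟪M x, y⟫ = ⟪x, M y⟫) (hMpsd : ∀ x : X, 0 ≤ ⟪M x, x⟫)
    (u : ℕ → X) (β : ℕ → ℝ) (hβ : ∀ n, β n ∈ Set.Ico (0 : ℝ) 1)
    (y : ℕ → X) (hy : ∀ n, y n = u n + β n • (u n - u (n - 1)))
    (Fn : ℕ → X → ℝ)
    (hFn : ∀ n v, Fn n v = 1 / (4 * δt) * ‖v - u (n - 1)‖ ^ 2 - F v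
      - ⟪f (u n) - f (u (n - 1)), v - u (n - 1)⟫)
    (g : ℕ → X → ℝ)
    (hg : ∀ n v, g n v = H v + 3 / (4 * δt) * ‖v - u n‖ ^ 2
      - ⟪gradient (Fn n) (u n), v⟫ + 1 / 2 * ⟪M (v - y n), v - y n⟫)
    (hmin : ∀ n v, g n (u (n + 1)) ≤ g n v)
    (hδtL : δt ≤ 1 / (2 * L))
    (A : X → X → ℝ)
    (hA : ∀ x z, A x z = (H x + F x) + 1 / (4 * δt) * ‖x - z‖ ^ 2
      + L / 2 * ‖x - z‖ ^ 2 + 1 / 2 * ⟪M (x - z), x - z⟫)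
    (subH : X → Set X)
    (hsubH : ∀ x, subH x = {ξ : X | ∀ z, H x + ⟪ξ, z - x⟫ ≤ H z})
    (CM : X → X)
    (hCM : ∀ v, CM v = (1 / (2 * δt) + L) • v + M v)
    (subA : X → X → Set (X × X))
    (hsubA : ∀ x z, subA x z
      = {p : X × X | ∃ ξ ∈ subH x, p = (ξ + f x + CM (x - z), -CM (x - z))})
    :
    ∃ D : ℝ, 0 < D ∧
      (∀ n : ℕ, ∃ ξ ∈ subH (u (n + 1)),
        ‖ξ + f (u (n + 1)) + CM (u (n + 1) - u n)‖ + ‖CM (u (n + 1) - u n)‖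
          ≤ D * (‖u (n + 1) - u n‖ + ‖u n - u (n - 1)‖))
      ∧ ∀ n : ℕ, Metric.infDist ((0, 0) : X × X) (subA (u (n + 1)) (u n))
          ≤ D * (‖u (n + 1) - u n‖ + ‖u n - u (n - 1)‖) := by
  have hMn : (0:ℝ) ≤ ‖M‖ := norm_nonneg _
  have hδ : (0:ℝ) < 1 / δt := by positivity
  have hne : δt ≠ 0 := ne_of_gt hδt
  set D : ℝ := 2 / δt + 3 * L + 2 * ‖M‖ + 1 with hD
  have hD0 : 0 < D := by positivity
  have key : ∀ n : ℕ, ∃ ξ ∈ subH (u (n + 1)),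
      ‖ξ + f (u (n + 1)) + CM (u (n + 1) - u n)‖ + ‖CM (u (n + 1) - u n)‖
        ≤ D * (‖u (n + 1) - u n‖ + ‖u n - u (n - 1)‖) := by
    intro n
    obtain ⟨hβ0, hβ1⟩ := hβ n
    -- the gradient of Fn n at u n
    have hcg : gradient (Fn n) (u n)
        = (1 / (2 * δt)) • (u n - u (n - 1)) - f (u n) - (f (u n) - f (u (n - 1))) := by
      apply HasGradientAt.gradient
      rw [hasGradientAt_iff_isLittleO]
      have hres : (fun v => Fn n v - Fn n (u n)
            - ⟪(1 / (2 * δt)) • (u n - u (n - 1)) - f (u n) - (f (u n) - f (u (n - 1))),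
                v - u n⟫)
          = fun v => 1 / (4 * δt) * ‖v - u n‖ ^ 2 - (F v - F (u n) - ⟪f (u n), v - u n⟫) := by
        funext v
        have hexp : ‖v - u (n - 1)‖ ^ 2
            = ‖u n - u (n - 1)‖ ^ 2 + 2 * ⟪u n - u (n - 1), v - u n⟫ + ‖v - u n‖ ^ 2 := by
          rw [show v - u (n - 1) = (u n - u (n - 1)) + (v - u n) by abel, norm_add_sq_real]
        have h2 : (⟪f (u n) - f (u (n - 1)), v - u (n - 1)⟫ : ℝ)
            = ⟪f (u n) - f (u (n - 1)), v - u n⟫ + ⟪f (u n) - f (u (n - 1)), u n - u (n - 1)⟫ := by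
          rw [show v - u (n - 1) = (v - u n) + (u n - u (n - 1)) by abel, inner_add_right]
        rw [hFn n v, hFn n (u n), hexp, h2]
        simp only [inner_sub_left, real_inner_smul_left]
        ring
      rw [hres]
      have hF1 := hasGradientAt_iff_isLittleO.mp (hF (u n))
      have hq : (fun v : X => 1 / (4 * δt) * ‖v - u n‖ ^ 2) =o[𝓝 (u n)] fun v => v - u n := by
        rw [Asymptotics.isLittleO_iff]
        intro c hc
        rw [Metric.eventually_nhds_iff]
        refine ⟨4 * δt * c, by positivity, fun v hv => ?_⟩
        rw [dist_eq_norm] at hv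
        have h0 : (0:ℝ) ≤ ‖v - u n‖ := norm_nonneg _
        have hs : ‖v - u n‖ * ‖v - u n‖ ≤ (4 * δt * c) * ‖v - u n‖ :=
          mul_le_mul_of_nonneg_right hv.le h0
        rw [Real.norm_eq_abs, abs_of_nonneg (by positivity : (0:ℝ) ≤ 1 / (4 * δt) * ‖v - u n‖ ^ 2)]
        calc 1 / (4 * δt) * ‖v - u n‖ ^ 2 = (‖v - u n‖ * ‖v - u n‖) / (4 * δt) := by ring
          _ ≤ ((4 * δt * c) * ‖v - u n‖) / (4 * δt) := by gcongr
          _ = c * ‖v - u n‖ := by field_simp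
      exact hq.sub hF1
    -- apply the abstract subgradient lemma
    have hQnn : ∀ v : X, (0:ℝ) ≤ 3 / (4 * δt) * ‖v‖ ^ 2 + 1 / 2 * ⟪M v, v⟫ := by
      intro v
      have h1 : (0:ℝ) ≤ 3 / (4 * δt) := div_nonneg (by norm_num) (by linarith)
      have h2 := hMpsd v
      nlinarith [sq_nonneg ‖v‖]
    have hexpφ : ∀ (v : X) (t : ℝ),
        (fun v => 3 / (4 * δt) * ‖v - u n‖ ^ 2 - ⟪gradient (Fn n) (u n), v⟫
          + 1 / 2 * ⟪M (v - y n), v - y n⟫) (u (n + 1) + t • v)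
        = (fun v => 3 / (4 * δt) * ‖v - u n‖ ^ 2 - ⟪gradient (Fn n) (u n), v⟫
          + 1 / 2 * ⟪M (v - y n), v - y n⟫) (u (n + 1))
          + t * ⟪(2 * (3 / (4 * δt))) • (u (n + 1) - u n) - gradient (Fn n) (u n)
              + M (u (n + 1) - y n), v⟫
          + t ^ 2 * ((fun v => 3 / (4 * δt) * ‖v‖ ^ 2 + 1 / 2 * ⟪M v, v⟫) v) := by
      intro v t
      exact phi_expand M hMsa (3 / (4 * δt)) (u n) (y n) (gradient (Fn n) (u n)) (u (n + 1)) v t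
    have hminφ : ∀ v, H (u (n + 1))
        + (fun v => 3 / (4 * δt) * ‖v - u n‖ ^ 2 - ⟪gradient (Fn n) (u n), v⟫
          + 1 / 2 * ⟪M (v - y n), v - y n⟫) (u (n + 1))
        ≤ H v + (fun v => 3 / (4 * δt) * ‖v - u n‖ ^ 2 - ⟪gradient (Fn n) (u n), v⟫
          + 1 / 2 * ⟪M (v - y n), v - y n⟫) v := by
      intro v
      have h := hmin n v
      rw [hg n (u (n + 1)), hg n v] at h
      dsimp only
      linarith
    have hsub := subgrad_of_min H
      (fun v => 3 / (4 * δt) * ‖v - u n‖ ^ 2 - ⟪gradient (Fn n) (u n), v⟫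
        + 1 / 2 * ⟪M (v - y n), v - y n⟫)
      hH (u (n + 1))
      ((2 * (3 / (4 * δt))) • (u (n + 1) - u n) - gradient (Fn n) (u n) + M (u (n + 1) - y n))
      (fun v => 3 / (4 * δt) * ‖v‖ ^ 2 + 1 / 2 * ⟪M v, v⟫)
      hQnn hexpφ hminφ
    refine ⟨-((2 * (3 / (4 * δt))) • (u (n + 1) - u n) - gradient (Fn n) (u n)
      + M (u (n + 1) - y n)), ?_, ?_⟩
    · rw [hsubH]; exact hsub
    · -- the norm bound
      have hVeq : -((2 * (3 / (4 * δt))) • (u (n + 1) - u n) - gradient (Fn n) (u n)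
            + M (u (n + 1) - y n)) + f (u (n + 1)) + CM (u (n + 1) - u n)
          = (L - 1 / δt) • (u (n + 1) - u n) + (1 / (2 * δt)) • (u n - u (n - 1))
            + ((f (u (n + 1)) - f (u n)) - (f (u n) - f (u (n - 1))))
            + (β n) • (M (u n - u (n - 1))) := by
        have hMy : M (u (n + 1) - y n)
            = M (u (n + 1) - u n) - (β n) • M (u n - u (n - 1)) := by
          rw [hy n, show u (n + 1) - (u n + β n • (u n - u (n - 1)))
            = (u (n + 1) - u n) - β n • (u n - u (n - 1)) from by module, map_sub, map_smul]
        rw [hcg, hCM, hMy,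
          show (L - 1 / δt : ℝ) = (1 / (2 * δt) + L) - 2 * (3 / (4 * δt)) from by
            field_simp; ring]
        module
      rw [hVeq]
      have n1 : ‖(L - 1 / δt) • (u (n + 1) - u n)‖ ≤ (1 / δt + L) * ‖u (n + 1) - u n‖ := by
        rw [norm_smul, Real.norm_eq_abs]
        exact mul_le_mul_of_nonneg_right (abs_le.mpr ⟨by linarith, by linarith⟩) (norm_nonneg _)
      have n2 : ‖(1 / (2 * δt)) • (u n - u (n - 1))‖ = (1 / (2 * δt)) * ‖u n - u (n - 1)‖ := by
        rw [norm_smul, Real.norm_eq_abs, abs_of_pos (by positivity)]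
      have n3 : ‖(f (u (n + 1)) - f (u n)) - (f (u n) - f (u (n - 1)))‖
          ≤ L * ‖u (n + 1) - u n‖ + L * ‖u n - u (n - 1)‖ :=
        (norm_sub_le _ _).trans (add_le_add (hf _ _) (hf _ _))
      have n4 : ‖(β n) • M (u n - u (n - 1))‖ ≤ ‖M‖ * ‖u n - u (n - 1)‖ := by
        rw [norm_smul, Real.norm_eq_abs, abs_of_nonneg hβ0]
        calc β n * ‖M (u n - u (n - 1))‖ ≤ 1 * (‖M‖ * ‖u n - u (n - 1)‖) :=
              mul_le_mul hβ1.le (M.le_opNorm _) (norm_nonneg _) zero_le_one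
          _ = ‖M‖ * ‖u n - u (n - 1)‖ := one_mul _
      have n5 : ‖CM (u (n + 1) - u n)‖
          ≤ (1 / (2 * δt) + L) * ‖u (n + 1) - u n‖ + ‖M‖ * ‖u (n + 1) - u n‖ := by
        rw [hCM]
        refine (norm_add_le _ _).trans (add_le_add ?_ (M.le_opNorm _))
        rw [norm_smul, Real.norm_eq_abs, abs_of_pos (by positivity)]
      have tri := norm_add4_le ((L - 1 / δt) • (u (n + 1) - u n))
        ((1 / (2 * δt)) • (u n - u (n - 1)))
        ((f (u (n + 1)) - f (u n)) - (f (u n) - f (u (n - 1))))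
        ((β n) • (M (u n - u (n - 1))))
      set x := ‖u (n + 1) - u n‖ with hx'
      set yv := ‖u n - u (n - 1)‖ with hyv'
      have hx : (0:ℝ) ≤ x := norm_nonneg _
      have hy0 : (0:ℝ) ≤ yv := norm_nonneg _
      have ehalf : 1 / (2 * δt) = (1 / δt) / 2 := by field_simp
      have e2 : 2 / δt = 2 * (1 / δt) := by ring
      have hc1 : (1 / δt + L) + L + (1 / (2 * δt) + L) + ‖M‖ ≤ D := by
        rw [hD]; linarith
      have hc2 : 1 / (2 * δt) + L + ‖M‖ ≤ D := by rw [hD]; linarith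
      have htotal : ((1 / δt + L) * x + (1 / (2 * δt)) * yv + (L * x + L * yv) + ‖M‖ * yv)
          + ((1 / (2 * δt) + L) * x + ‖M‖ * x) ≤ D * (x + yv) := by
        nlinarith [mul_le_mul_of_nonneg_right hc1 hx, mul_le_mul_of_nonneg_right hc2 hy0]
      linarith [tri, n1, n2, n3, n4, n5, htotal]
  refine ⟨D, hD0, key, ?_⟩
  intro n
  obtain ⟨ξ, hξ, hbound⟩ := key n
  have hmem : ((ξ + f (u (n + 1)) + CM (u (n + 1) - u n), -CM (u (n + 1) - u n)) : X × X)
      ∈ subA (u (n + 1)) (u n) := by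
    rw [hsubA]
    exact ⟨ξ, hξ, rfl⟩
  refine le_trans (Metric.infDist_le_dist_of_mem hmem) ?_
  rw [Prod.dist_eq]
  simp only [dist_zero_left, norm_neg]
  exact max_le
    (le_trans (le_add_of_nonneg_right (norm_nonneg _)) hbound)
    (le_trans (le_add_of_nonneg_left (norm_nonneg _)) hbound)
end

section
/- Assume 0 < δt ≤ 1/(2L), E is bounded below on X, and E is level-bounded (i.e., for every a ∈ ℝ the sublevel set {x ∈ X : E(x) ≤ a} is bounded). Then the sequence (A(u^{n+1}, uⁿ)) is monotonically nonincreasing and converges to a limit ζ, and the sequence (uⁿ) is bounded. -/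
open scoped RealInnerProductSpace
open Filter Topology


lemma grad_aux {X : Type*} [NormedAddCommGroup X] [InnerProductSpace ℝ X] [CompleteSpace X]
    (F : X → ℝ) (f : X → X) (hF : ∀ x, HasGradientAt F (f x) x)
    (c : ℝ) (a q p : X) :
    HasGradientAt (fun v => c * ‖v - a‖ ^ 2 - F v - ⟪q, v - a⟫)
      ((2*c) • (p - a) - f p - q) p := by
  rw [hasGradientAt_iff_hasFDerivAt]
  have h1 : HasFDerivAt (fun v : X => ⟪v - a, v - a⟫) _ p :=
    ((hasFDerivAt_id p).sub_const a).inner ℝ ((hasFDerivAt_id p).sub_const a)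
  have h1' := h1.const_mul c
  have h2 := (hF p).hasFDerivAt
  have h3 : HasFDerivAt (fun v : X => ⟪q, v - a⟫) _ p :=
    (hasFDerivAt_const q p).inner ℝ ((hasFDerivAt_id p).sub_const a)
  have : HasFDerivAt (fun v : X => c * ⟪v - a, v - a⟫ - F v - ⟪q, v - a⟫) _ p :=
    (h1'.sub h2).sub h3
  have heq : (fun v : X => c * ⟪v - a, v - a⟫ - F v - ⟪q, v - a⟫)
      = (fun v => c * ‖v - a‖ ^ 2 - F v - ⟪q, v - a⟫) := by
    funext v; rw [real_inner_self_eq_norm_sq]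
  rw [heq] at this
  refine this.congr_fderiv (Eq.symm ?_)
  ext v
  simp [InnerProductSpace.toDual_apply_apply, inner_sub_left, inner_sub_right,
    inner_smul_left, fderivInnerCLM_apply]
  rw [real_inner_comm v p, real_inner_comm v a]
  ring


lemma descentL {X : Type*} [NormedAddCommGroup X] [InnerProductSpace ℝ X] [CompleteSpace X]
    (F : X → ℝ) (f : X → X) (L : ℝ) (hL : 0 < L)
    (hF : ∀ x, HasGradientAt F (f x) x)
    (hf : ∀ x y : X, ‖f x - f y‖ ≤ L * ‖x - y‖) (b c : X) :
    F c ≤ F b + ⟪f b, c - b⟫ + L * ‖c - b‖ ^ 2 := by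
  set G : X → ℝ := fun x => F x - ⟪f b, x⟫ with hG
  have hGd : ∀ x : X, HasFDerivAt G (InnerProductSpace.toDual ℝ X (f x - f b)) x := by
    intro x
    have h1 := (hF x).hasFDerivAt
    have h2 : HasFDerivAt (fun v : X => ⟪f b, v⟫) _ x :=
      (hasFDerivAt_const (f b) x).inner ℝ (hasFDerivAt_id x)
    have : HasFDerivAt G _ x := h1.sub h2
    refine this.congr_fderiv (Eq.symm ?_)
    ext v
    simp [InnerProductSpace.toDual_apply_apply, inner_sub_left, fderivInnerCLM_apply]
  have hseg : ∀ x ∈ segment ℝ b c, ‖x - b‖ ≤ ‖c - b‖ := by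
    intro x hx
    obtain ⟨α, β', hα, hβ, hs, rfl⟩ := hx
    have : α • b + β' • c - b = β' • (c - b) := by
      have : α = 1 - β' := by linarith
      rw [this]; module
    rw [this, norm_smul]
    calc ‖β'‖ * ‖c - b‖ ≤ 1 * ‖c - b‖ := by
          apply mul_le_mul_of_nonneg_right _ (norm_nonneg _)
          rw [Real.norm_eq_abs, abs_of_nonneg hβ]; linarith
      _ = ‖c - b‖ := one_mul _
  have key := (convex_segment b c).norm_image_sub_le_of_norm_hasFDerivWithin_le
    (f' := fun x => InnerProductSpace.toDual ℝ X (f x - f b))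
    (C := L * ‖c - b‖)
    (fun x _ => (hGd x).hasFDerivWithinAt)
    (fun x hx => by
      rw [LinearIsometryEquiv.norm_map]
      calc ‖f x - f b‖ ≤ L * ‖x - b‖ := hf x b
        _ ≤ L * ‖c - b‖ := by
            exact mul_le_mul_of_nonneg_left (hseg x hx) hL.le)
    (left_mem_segment ℝ b c) (right_mem_segment ℝ b c)
  have h2 : G c - G b ≤ L * ‖c - b‖ * ‖c - b‖ := (le_abs_self _).trans key
  have : G c - G b = F c - F b - ⟪f b, c - b⟫ := by
    simp [hG, inner_sub_right]; ring
  rw [this] at h2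
  nlinarith [sq_nonneg (‖c-b‖)]


lemma Mcs_aux {X : Type*} [NormedAddCommGroup X] [InnerProductSpace ℝ X]
    (M : X →L[ℝ] X)
    (hMsa : ∀ x y : X, ⟪M x, y⟫ = ⟪x, M y⟫) (hMpsd : ∀ x : X, 0 ≤ ⟪M x, x⟫)
    (x z : X) : 2 * ⟪M x, z⟫ ≤ ⟪M x, x⟫ + ⟪M z, z⟫ := by
  have h := hMpsd (x - z)
  have e : ⟪M (x - z), x - z⟫ = ⟪M x, x⟫ - 2 * ⟪M x, z⟫ + ⟪M z, z⟫ := by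
    rw [map_sub, inner_sub_left, inner_sub_right, inner_sub_right]
    have : ⟪M z, x⟫ = ⟪M x, z⟫ := by rw [hMsa z x]; exact real_inner_comm _ _
    rw [this]; ring
  rw [e] at h; linarith

set_option maxHeartbeats 1000000 in
lemma step_aux {X : Type*} [NormedAddCommGroup X] [InnerProductSpace ℝ X]
    (H : X → ℝ) (f : X → X) (L s : ℝ) (M : X →L[ℝ] X)
    (hH : ConvexOn ℝ Set.univ H) (hL : 0 < L)
    (hf : ∀ x y : X, ‖f x - f y‖ ≤ L * ‖x - y‖)
    (hMsa : ∀ x y : X, ⟪M x, y⟫ = ⟪x, M y⟫) (hMpsd : ∀ x : X, 0 ≤ ⟪M x, x⟫)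
    (hs : 0 < s) (hsL : 2 * L ≤ 4 * s)
    (a b c : X) (Fb Fc : ℝ)
    (hdes : Fc ≤ Fb + ⟪f b, c - b⟫ + L * ‖c - b‖ ^ 2)
    (β' : ℝ) (hβ0 : 0 ≤ β') (hβ1 : β' < 1)
    (w yy : X) (hw : w = (2 * s) • (b - a) - f b - (f b - f a))
    (hyy : yy = b + β' • (b - a))
    (hmin' : ∀ v : X, H c + 3 * s * ‖c - b‖ ^ 2 - ⟪w, c⟫
        + 1 / 2 * ⟪M (c - yy), c - yy⟫
      ≤ H v + 3 * s * ‖v - b‖ ^ 2 - ⟪w, v⟫ + 1 / 2 * ⟪M (v - yy), v - yy⟫) :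
    (H c + Fc) + s * ‖c - b‖ ^ 2 + L / 2 * ‖c - b‖ ^ 2
        + 1 / 2 * ⟪M (c - b), c - b⟫
      ≤ (H b + Fb) + s * ‖b - a‖ ^ 2 + L / 2 * ‖b - a‖ ^ 2
        + 1 / 2 * ⟪M (b - a), b - a⟫ := by
  have hquad0 : 0 ≤ 3 * s * ‖b - c‖ ^ 2 + 1 / 2 * ⟪M (b - c), b - c⟫ := by
    have := hMpsd (b - c)
    have h1 : (0:ℝ) ≤ 3 * s * ‖b - c‖ ^ 2 := by positivity
    linarith
  have hkey : ∀ t : ℝ, 0 < t → t ≤ 1 →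
      0 ≤ (H b - H c + 6 * s * ⟪c - b, b - c⟫ - ⟪w, b - c⟫ + ⟪M (c - yy), b - c⟫)
        + t * (3 * s * ‖b - c‖ ^ 2 + 1 / 2 * ⟪M (b - c), b - c⟫) := by
    intro t ht ht1
    have A1 : ‖(c + t • (b - c)) - b‖ ^ 2
        = ‖c - b‖ ^ 2 + 2 * t * ⟪c - b, b - c⟫ + t ^ 2 * ‖b - c‖ ^ 2 := by
      have hpb : (c + t • (b - c)) - b = (c - b) + t • (b - c) := by module
      rw [hpb, norm_add_sq_real, inner_smul_right, norm_smul, Real.norm_eq_abs,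
        mul_pow, sq_abs]
      ring
    have A2 : ⟪w, c + t • (b - c)⟫ = ⟪w, c⟫ + t * ⟪w, b - c⟫ := by
      rw [inner_add_right, inner_smul_right]
    have A3 : ⟪M ((c + t • (b - c)) - yy), (c + t • (b - c)) - yy⟫
        = ⟪M (c - yy), c - yy⟫ + 2 * t * ⟪M (c - yy), b - c⟫
          + t ^ 2 * ⟪M (b - c), b - c⟫ := by
      have hpy : (c + t • (b - c)) - yy = (c - yy) + t • (b - c) := by module
      rw [hpy, map_add, map_smul, inner_add_left, inner_add_right, inner_add_right,
        inner_smul_left, inner_smul_right, inner_smul_left, inner_smul_right]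
      have hsym : ⟪M (b - c), c - yy⟫ = ⟪M (c - yy), b - c⟫ := by
        rw [hMsa (b - c) (c - yy)]; exact real_inner_comm _ _
      rw [hsym]
      simp only [RCLike.star_def, conj_trivial]
      ring
    have A4 : H (c + t • (b - c)) ≤ (1 - t) * H c + t * H b := by
      have hcomb : c + t • (b - c) = (1 - t) • c + t • b := by module
      rw [hcomb]
      exact hH.2 (Set.mem_univ c) (Set.mem_univ b) (by linarith) ht.le (by ring)
    have h0 := hmin' (c + t • (b - c))
    rw [A1, A2, A3] at h0
    have h' : 0 ≤ t * ((H b - H c + 6 * s * ⟪c - b, b - c⟫ - ⟪w, b - c⟫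
        + ⟪M (c - yy), b - c⟫)
        + t * (3 * s * ‖b - c‖ ^ 2 + 1 / 2 * ⟪M (b - c), b - c⟫)) := by
      nlinarith [h0, A4]
    exact nonneg_of_mul_nonneg_right h' ht
  have hlin0 : 0 ≤ H b - H c + 6 * s * ⟪c - b, b - c⟫ - ⟪w, b - c⟫
      + ⟪M (c - yy), b - c⟫ := by
    by_contra hneg
    push_neg at hneg
    set lin : ℝ := H b - H c + 6 * s * ⟪c - b, b - c⟫ - ⟪w, b - c⟫
      + ⟪M (c - yy), b - c⟫ with hlin
    set quad : ℝ := 3 * s * ‖b - c‖ ^ 2 + 1 / 2 * ⟪M (b - c), b - c⟫ with hquad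
    have hq1 : (0:ℝ) < quad + 1 := by linarith
    have ht0 : 0 < min 1 (-lin / (quad + 1)) :=
      lt_min one_pos (div_pos (by linarith) hq1)
    have ht1 : min 1 (-lin / (quad + 1)) ≤ 1 := min_le_left _ _
    have h5 : (min 1 (-lin / (quad + 1))) * (quad + 1) ≤ -lin := by
      calc (min 1 (-lin / (quad + 1))) * (quad + 1)
          ≤ (-lin / (quad + 1)) * (quad + 1) :=
            mul_le_mul_of_nonneg_right (min_le_right _ _) hq1.le
        _ = -lin := by field_simp
    have hk := hkey _ ht0 ht1
    nlinarith [hk, h5, ht0]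
  -- expand the inner products
  have ipcd : ⟪c - b, b - c⟫ = -‖c - b‖ ^ 2 := by
    rw [show b - c = -(c - b) by abel, inner_neg_right, real_inner_self_eq_norm_sq]
  have wd : ⟪w, b - c⟫ = -(2 * s * ⟪b - a, c - b⟫ - 2 * ⟪f b, c - b⟫
      + ⟪f a, c - b⟫) := by
    rw [hw, show b - c = -(c - b) by abel]
    simp only [inner_neg_right, inner_sub_left, inner_smul_left, RCLike.star_def,
      conj_trivial]
    ring
  have mcyd : ⟪M (c - yy), b - c⟫ = -⟪M (c - b), c - b⟫ + β' * ⟪M (b - a), c - b⟫ := by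
    have hcy : c - yy = (c - b) - β' • (b - a) := by rw [hyy]; module
    rw [hcy, show b - c = -(c - b) by abel, map_sub, map_smul, inner_sub_left,
      inner_neg_right, inner_neg_right, inner_smul_left]
    have hsym2 : ⟪M (b - a), c - b⟫ = ⟪M (c - b), b - a⟫ := by
      rw [hMsa (b - a) (c - b)]; exact real_inner_comm _ _
    simp only [RCLike.star_def, conj_trivial]
    rw [hsym2]
    ring
  rw [ipcd, wd, mcyd] at hlin0
  -- scalar facts
  have hm12 : 2 * ⟪M (b - a), c - b⟫ ≤ ⟪M (b - a), b - a⟫ + ⟪M (c - b), c - b⟫ :=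
    Mcs_aux M hMsa hMpsd (b - a) (c - b)
  have hfdiff : ⟪f a, c - b⟫ - ⟪f b, c - b⟫ ≤ L * (‖b - a‖ * ‖c - b‖) := by
    have h1 : ⟪f a - f b, c - b⟫ ≤ ‖f a - f b‖ * ‖c - b‖ := real_inner_le_norm _ _
    have h2 : ‖f a - f b‖ ≤ L * ‖a - b‖ := hf a b
    have h3 : ‖a - b‖ = ‖b - a‖ := norm_sub_rev _ _
    rw [inner_sub_left] at h1
    have h4 : ‖f a - f b‖ * ‖c - b‖ ≤ (L * ‖b - a‖) * ‖c - b‖ := by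
      apply mul_le_mul_of_nonneg_right _ (norm_nonneg _)
      rw [← h3]; exact h2
    linarith [h1, h4]
  have hcs : ⟪b - a, c - b⟫ ≤ ‖b - a‖ * ‖c - b‖ := real_inner_le_norm _ _
  have hamgm : ‖b - a‖ * ‖c - b‖ ≤ (‖b - a‖ ^ 2 + ‖c - b‖ ^ 2) / 2 := by
    nlinarith [sq_nonneg (‖b - a‖ - ‖c - b‖)]
  have hnbc : ‖b - c‖ = ‖c - b‖ := norm_sub_rev _ _
  have hs1 : s * ⟪b - a, c - b⟫ ≤ s * ((‖b - a‖ ^ 2 + ‖c - b‖ ^ 2) / 2) :=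
    mul_le_mul_of_nonneg_left (hcs.trans hamgm) hs.le
  have hL1 : L * (‖b - a‖ * ‖c - b‖) ≤ L * ((‖b - a‖ ^ 2 + ‖c - b‖ ^ 2) / 2) :=
    mul_le_mul_of_nonneg_left hamgm hL.le
  have hP2 : 2 * L * ‖c - b‖ ^ 2 ≤ 4 * s * ‖c - b‖ ^ 2 :=
    mul_le_mul_of_nonneg_right hsL (sq_nonneg _)
  have hβm : β' * ⟪M (b - a), c - b⟫
      ≤ (⟪M (b - a), b - a⟫ + ⟪M (c - b), c - b⟫) / 2 := by
    have hnn : (0:ℝ) ≤ (⟪M (b - a), b - a⟫ + ⟪M (c - b), c - b⟫) / 2 := by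
      have := hMpsd (b - a); have := hMpsd (c - b); linarith
    calc β' * ⟪M (b - a), c - b⟫
        ≤ β' * ((⟪M (b - a), b - a⟫ + ⟪M (c - b), c - b⟫) / 2) :=
          mul_le_mul_of_nonneg_left (by linarith) hβ0
      _ ≤ 1 * ((⟪M (b - a), b - a⟫ + ⟪M (c - b), c - b⟫) / 2) :=
          mul_le_mul_of_nonneg_right (by linarith) hnn
      _ = _ := one_mul _
  linarith [hlin0, hdes, hs1, hL1, hP2, hβm]

/-- Theorem 3.6(ii): the sequence `A(u^{n+1},uⁿ)` is monotonically nonincreasing and convergent, and the iterates are bounded. -/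
theorem stmt_8
    {X : Type*} [NormedAddCommGroup X] [InnerProductSpace ℝ X] [FiniteDimensional ℝ X]
    (H F : X → ℝ) (f : X → X) (L δt : ℝ) (M : X →L[ℝ] X)
    (hH : ConvexOn ℝ Set.univ H) (hHcont : Continuous H)
    (hF : ∀ x, HasGradientAt F (f x) x)
    (hL : 0 < L) (hf : ∀ x y : X, ‖f x - f y‖ ≤ L * ‖x - y‖)
    (hδt : 0 < δt)
    (hMsa : ∀ x y : X, ⟪M x, y⟫ = ⟪x, M y⟫) (hMpsd : ∀ x : X, 0 ≤ ⟪M x, x⟫)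
    (u : ℕ → X) (β : ℕ → ℝ) (hβ : ∀ n, β n ∈ Set.Ico (0 : ℝ) 1)
    (y : ℕ → X) (hy : ∀ n, y n = u n + β n • (u n - u (n - 1)))
    (Fn : ℕ → X → ℝ)
    (hFn : ∀ n v, Fn n v = 1 / (4 * δt) * ‖v - u (n - 1)‖ ^ 2 - F v
      - ⟪f (u n) - f (u (n - 1)), v - u (n - 1)⟫)
    (g : ℕ → X → ℝ)
    (hg : ∀ n v, g n v = H v + 3 / (4 * δt) * ‖v - u n‖ ^ 2
      - ⟪gradient (Fn n) (u n), v⟫ + 1 / 2 * ⟪M (v - y n), v - y n⟫)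
    (hmin : ∀ n v, g n (u (n + 1)) ≤ g n v)
    (hδtL : δt ≤ 1 / (2 * L))
    (hEbdd : ∃ B : ℝ, ∀ x : X, B ≤ H x + F x)
    (hlev : ∀ a : ℝ, Bornology.IsBounded {x : X | H x + F x ≤ a})
    (A : X → X → ℝ)
    (hA : ∀ x z, A x z = (H x + F x) + 1 / (4 * δt) * ‖x - z‖ ^ 2
      + L / 2 * ‖x - z‖ ^ 2 + 1 / 2 * ⟪M (x - z), x - z⟫)
    :
    (∀ n : ℕ, A (u (n + 2)) (u (n + 1)) ≤ A (u (n + 1)) (u n))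
      ∧ (∃ ζ : ℝ, Filter.Tendsto (fun n : ℕ => A (u (n + 1)) (u n)) Filter.atTop (nhds ζ))
      ∧ ∃ R : ℝ, ∀ n : ℕ, ‖u n‖ ≤ R := by
  have hsL : 2 * L ≤ 4 * (1 / (4 * δt)) := by
    have h1 : (4:ℝ) * (1 / (4 * δt)) = 1 / δt := by field_simp
    rw [h1, le_div_iff₀ hδt]
    have := (le_div_iff₀ (by positivity : (0:ℝ) < 2 * L)).mp hδtL
    linarith
  have hdesc : ∀ n : ℕ, A (u (n + 2)) (u (n + 1)) ≤ A (u (n + 1)) (u n) := by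
    intro n
    have hFn1 : Fn (n + 1) = fun v => 1 / (4 * δt) * ‖v - u n‖ ^ 2 - F v
        - ⟪f (u (n + 1)) - f (u n), v - u n⟫ := by
      funext v; rw [hFn]; simp only [Nat.add_sub_cancel]
    have hgrad : gradient (Fn (n + 1)) (u (n + 1))
        = (2 * (1 / (4 * δt))) • (u (n + 1) - u n) - f (u (n + 1))
          - (f (u (n + 1)) - f (u n)) := by
      rw [hFn1]
      exact (grad_aux F f hF (1 / (4 * δt)) (u n) (f (u (n + 1)) - f (u n))
        (u (n + 1))).gradient
    have hyy : y (n + 1) = u (n + 1) + β (n + 1) • (u (n + 1) - u n) := by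
      rw [hy]; simp only [Nat.add_sub_cancel]
    obtain ⟨hβ0, hβ1⟩ := hβ (n + 1)
    have hmin'' : ∀ v : X, H (u (n + 2)) + 3 * (1 / (4 * δt)) * ‖u (n + 2) - u (n + 1)‖ ^ 2
        - ⟪(2 * (1 / (4 * δt))) • (u (n + 1) - u n) - f (u (n + 1))
            - (f (u (n + 1)) - f (u n)), u (n + 2)⟫
        + 1 / 2 * ⟪M (u (n + 2) - y (n + 1)), u (n + 2) - y (n + 1)⟫
      ≤ H v + 3 * (1 / (4 * δt)) * ‖v - u (n + 1)‖ ^ 2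
        - ⟪(2 * (1 / (4 * δt))) • (u (n + 1) - u n) - f (u (n + 1))
            - (f (u (n + 1)) - f (u n)), v⟫
        + 1 / 2 * ⟪M (v - y (n + 1)), v - y (n + 1)⟫ := by
      intro v
      have h := hmin (n + 1) v
      rw [hg, hg, hgrad] at h
      have he : n + 1 + 1 = n + 2 := rfl
      rw [he] at h
      rw [show (3:ℝ) / (4 * δt) = 3 * (1 / (4 * δt)) by ring] at h
      exact h
    have hdes := descentL F f L hL hF hf (u (n + 1)) (u (n + 2))
    have hstep := step_aux H f L (1 / (4 * δt)) M hH hL hf hMsa hMpsd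
      (by positivity) hsL (u n) (u (n + 1)) (u (n + 2)) (F (u (n + 1))) (F (u (n + 2)))
      hdes (β (n + 1)) hβ0 hβ1 _ (y (n + 1)) rfl hyy hmin''
    rw [hA, hA]
    have hcoef : ∀ r : ℝ, 1 / (4 * δt) * r = (1 / (4 * δt)) * r := fun r => rfl
    linarith [hstep]
  obtain ⟨B, hB⟩ := hEbdd
  have hanti : Antitone (fun n : ℕ => A (u (n + 1)) (u n)) :=
    antitone_nat_of_succ_le fun n => hdesc n
  refine ⟨hdesc, ⟨_, tendsto_atTop_ciInf hanti ⟨B, ?_⟩⟩, ?_⟩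
  · rintro x ⟨n, rfl⟩
    simp only
    rw [hA]
    have h1 : (0:ℝ) ≤ 1 / (4 * δt) * ‖u (n + 1) - u n‖ ^ 2 := by positivity
    have h2 : (0:ℝ) ≤ L / 2 * ‖u (n + 1) - u n‖ ^ 2 := by positivity
    have h3 := hMpsd (u (n + 1) - u n)
    have := hB (u (n + 1))
    linarith
  · have hsub : ∀ n : ℕ, u (n + 1) ∈ {x : X | H x + F x ≤ A (u 1) (u 0)} := by
      intro n
      have h1 : A (u (n + 1)) (u n) ≤ A (u 1) (u 0) := hanti (Nat.zero_le n)
      have h2 : H (u (n + 1)) + F (u (n + 1)) ≤ A (u (n + 1)) (u n) := by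
        rw [hA]
        have q1 : (0:ℝ) ≤ 1 / (4 * δt) * ‖u (n + 1) - u n‖ ^ 2 := by positivity
        have q2 : (0:ℝ) ≤ L / 2 * ‖u (n + 1) - u n‖ ^ 2 := by positivity
        have q3 := hMpsd (u (n + 1) - u n)
        linarith
      exact le_trans h2 h1
    obtain ⟨R, hR⟩ := (isBounded_iff_forall_norm_le).mp (hlev (A (u 1) (u 0)))
    refine ⟨max R ‖u 0‖, fun n => ?_⟩
    cases n with
    | zero => exact le_max_right _ _
    | succ m => exact le_trans (hR _ (hsub m)) (le_max_left _ _)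
end
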